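/- arXiv:2511.12718 — 9 statements merged into one kernel-verified Lean document; each statement's English description precedes it below -/
import Mathlib

section
/- For the multinomial leave-one-out setting with alphabet size m and sequence length N, the learner that, given a training count vector e (summing to N-1), assigns to letter j the probability q_e(j) = θ̂_j + (1 - m·θ̂_j)/(N-1), where θ̂_j = e(j)/(N-1), achieves leave-one-out regret R_loo(v) = (m-1)/N - (m-1)^2/(2(N-1)^2) + o(1/N^2) for every count vector v, uniformly in v. Concretely (first-order version): for every count vector v with all entries at least 1, R_loo(v) = Σ_j (v(j)/N)·log( (v(j)/N) / q_{v - î_j}(j) ) satisfies |R_loo(v) - (m-1)/N| ≤ C/N^2 for a constant C depending only on m. -/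
open Finset

/-- Pointwise two-sided bound for `p * log (p / q)`. -/
lemma log_ratio_bounds {p q : ℝ} (hp : 0 < p) (hq : 0 < q) :
    p - q ≤ p * Real.log (p / q) ∧
      p * Real.log (p / q) ≤ (p - q) + (p - q) ^ 2 / q := by
  have h1 := Real.log_le_sub_one_of_pos (div_pos hq hp)
  have h2 := Real.log_le_sub_one_of_pos (div_pos hp hq)
  rw [Real.log_div hq.ne' hp.ne'] at h1
  rw [Real.log_div hp.ne' hq.ne'] at h2
  rw [Real.log_div hp.ne' hq.ne']
  constructor
  · have key : p * ((q - p) / p) = q - p := by field_simp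
    have h1' : Real.log q - Real.log p ≤ (q - p) / p := by
      have h : q / p - 1 = (q - p) / p := by field_simp
      linarith [h ▸ h1]
    nlinarith [mul_le_mul_of_nonneg_left h1' hp.le, key]
  · have key : p * ((p - q) / q) = (p - q) + (p - q) ^ 2 / q := by
      field_simp; ring
    have h2' : Real.log p - Real.log q ≤ (p - q) / q := by
      have h : p / q - 1 = (p - q) / q := by field_simp
      linarith [h ▸ h2]
    nlinarith [mul_le_mul_of_nonneg_left h2' hp.le, key]


/-- Auxiliary polynomial bound for the quadratic term. -/
lemma quad_poly_bound {M n w : ℝ} (hM2 : 2 ≤ M) (hnM : M + 2 ≤ n)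
    (hw1 : 1 ≤ w) (hwn : w ≤ n) :
    (w * ((M - 1) * n + 1) - M * n) ^ 2 ≤
      16 * M ^ 2 * (M + 2) * (w * (n - 1 - M) + M) * (n - 1) ^ 2 := by
  have hn0 : (0:ℝ) < n := by linarith
  have hn1 : (0:ℝ) < n - 1 := by linarith
  have hw0 : (0:ℝ) < w := by linarith
  set D : ℝ := w * ((M - 1) * n + 1) - M * n with hD_def
  have hMn1 : (1:ℝ) ≤ M * n := by nlinarith
  have hDub : D ≤ 2 * M * n * w := by
    have h1 : w ≤ M * n * w := by nlinarith
    have h2 : 0 ≤ w * n := by positivity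
    have h3 : 0 ≤ M * n := by positivity
    rw [hD_def]; nlinarith
  have hDlb : -(2 * M * n * w) ≤ D := by
    have h1 : M * n ≤ M * n * w := by nlinarith
    have h2 : w * n ≤ n * n := by nlinarith
    have h3 : w * (M * n) ≤ n * (M * n) := by nlinarith
    rw [hD_def]; nlinarith
  have hD2 : D ^ 2 ≤ (2 * M * n * w) ^ 2 := sq_le_sq' hDlb hDub
  have key1 : n ≤ (M + 2) * (n - M - 1) := by nlinarith
  have key2 : n ^ 2 ≤ 4 * (n - 1) ^ 2 := by nlinarith
  have key3 : n ^ 2 * w ≤ 4 * (M + 2) * (n - M - 1) * (n - 1) ^ 2 := by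
    have h1 : n ^ 2 * w ≤ n ^ 2 * n := by nlinarith
    have h2 : n ^ 2 * n ≤ ((M + 2) * (n - M - 1)) * (4 * (n - 1) ^ 2) := by
      have h4 := mul_le_mul key1 key2 (by positivity) (by nlinarith : (0:ℝ) ≤ (M + 2) * (n - M - 1))
      nlinarith [h4]
    linarith
  have h5 : (2 * M * n * w) ^ 2 = 4 * M ^ 2 * w * (n ^ 2 * w) := by ring
  have h6 : 4 * M ^ 2 * w * (n ^ 2 * w) ≤
      4 * M ^ 2 * w * (4 * (M + 2) * (n - M - 1) * (n - 1) ^ 2) :=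
    mul_le_mul_of_nonneg_left key3 (by positivity)
  have h7 : 4 * M ^ 2 * w * (4 * (M + 2) * (n - M - 1) * (n - 1) ^ 2) ≤
      16 * M ^ 2 * (M + 2) * (w * (n - 1 - M) + M) * (n - 1) ^ 2 := by
    nlinarith [sq_nonneg (n - 1), mul_pos hn1 hn1, sq_nonneg M,
      mul_nonneg (mul_nonneg (sq_nonneg M) (by linarith : (0:ℝ) ≤ M + 2))
        (sq_nonneg (n - 1))]
  calc D ^ 2 ≤ (2 * M * n * w) ^ 2 := hD2
    _ = 4 * M ^ 2 * w * (n ^ 2 * w) := h5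
    _ ≤ _ := le_trans h6 h7

/-- Auxiliary bounds on the main sum. -/
lemma main_sum_bounds {M n : ℝ} (hM2 : 2 ≤ M) (hnM : M + 2 ≤ n) :
    (M - 1) / n - 4 * M ^ 2 / n ^ 2 ≤ (M - 1) * (n - M - 1) / (n - 1) ^ 2 ∧
      (M - 1) * (n - M - 1) / (n - 1) ^ 2 ≤ (M - 1) / n := by
  have hn0 : (0:ℝ) < n := by linarith
  have hn1 : (0:ℝ) < n - 1 := by linarith
  constructor
  · rw [div_sub_div _ _ hn0.ne' (by positivity), div_le_div_iff₀ (by positivity) (by positivity)]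
    have e : (M - 1) * n ^ 2 * (n - 1) ^ 2 - (M - 1) * (n - M - 1) * (n * n ^ 2)
        = (M - 1) * ((M - 1) * n + 1) * n ^ 2 - (n - 1) ^ 2 * 0 := by ring_nf
    have h1 : (M - 1) * ((M - 1) * n + 1) ≤ M ^ 2 * n := by nlinarith
    have h2 : n ^ 2 ≤ 4 * (n - 1) ^ 2 := by nlinarith
    have h3 : (M - 1) * ((M - 1) * n + 1) * n ^ 2 ≤ M ^ 2 * n * n ^ 2 :=
      mul_le_mul_of_nonneg_right h1 (sq_nonneg n)
    have h4 : M ^ 2 * n * n ^ 2 ≤ M ^ 2 * n * (4 * (n - 1) ^ 2) :=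
      mul_le_mul_of_nonneg_left h2 (by positivity)
    nlinarith [h3, h4]
  · rw [div_le_div_iff₀ (by positivity) hn0]
    have h0 : (0:ℝ) ≤ (M - 1) * n + 1 := by
      nlinarith [mul_nonneg (show (0:ℝ) ≤ M - 1 by linarith) hn0.le]
    have h1 : (0:ℝ) ≤ (M - 1) * ((M - 1) * n + 1) :=
      mul_nonneg (by linarith) h0
    nlinarith [h1]

/-- Constant comparisons. -/
lemma const_bounds {M : ℝ} (hM2 : 2 ≤ M) :
    4 * M ^ 2 ≤ 40 * M ^ 4 ∧ M * (16 * M ^ 2 * (M + 2)) ≤ 40 * M ^ 4 := by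
  constructor
  · nlinarith [sq_nonneg M, sq_nonneg (M ^ 2 - 1)]
  · nlinarith [sq_nonneg M, pow_le_pow_left₀ (by linarith : (0:ℝ) ≤ 2) hM2 4]

set_option maxHeartbeats 1000000 in
/-- For the multinomial leave-one-out setting with alphabet size `m`,
the learner `q_e(j) = θ̂_j + (1 - m·θ̂_j)/(N-1)` with `θ̂_j = e(j)/(N-1)` achieves
`|R_loo(v) - (m-1)/N| ≤ C/N²` for a constant `C` depending only on `m`, uniformly over
count vectors `v` with all entries at least 1. -/
theorem multinomial_add_one_style_regret (m : ℕ) (hm : 2 ≤ m) :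
    ∃ C : ℝ, 0 < C ∧ ∀ N : ℕ, m + 2 ≤ N → ∀ v : Fin m → ℕ,
      (∑ j, v j) = N → (∀ j, 1 ≤ v j) →
      |(∑ j, ((v j : ℝ) / N) *
          Real.log (((v j : ℝ) / N) /
            (((v j : ℝ) - 1) / (N - 1) +
              (1 - m * (((v j : ℝ) - 1) / (N - 1))) / (N - 1))))
        - (m - 1) / N| ≤ C / N ^ 2 := by
  have hmpos : (0:ℕ) < m := by omega
  refine ⟨40 * (m : ℝ) ^ 4, by positivity, ?_⟩
  intro N hN v hsum hv
  have hM2 : (2:ℝ) ≤ (m:ℝ) := by exact_mod_cast hm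
  have hnM : (m:ℝ) + 2 ≤ (N:ℝ) := by exact_mod_cast hN
  have hn4 : (4:ℝ) ≤ (N:ℝ) := by linarith
  have hn0 : (0:ℝ) < (N:ℝ) := by linarith
  have hn1 : (0:ℝ) < (N:ℝ) - 1 := by linarith
  have hnm1 : (0:ℝ) < (N:ℝ) - 1 - (m:ℝ) := by linarith
  set n : ℝ := (N:ℝ) with hn_def
  set M : ℝ := (m:ℝ) with hM_def
  have hsumR : ∑ j, (v j : ℝ) = n := by
    rw [hn_def]; exact_mod_cast hsum
  have hv1 : ∀ j, (1:ℝ) ≤ (v j : ℝ) := by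
    intro j; exact_mod_cast hv j
  have hvn : ∀ j, (v j : ℝ) ≤ n := by
    intro j
    rw [← hsumR]
    exact Finset.single_le_sum (f := fun i => ((v i : ℝ))) (fun i _ => by positivity)
      (Finset.mem_univ j)
  -- the learner's probabilities
  set q : Fin m → ℝ := fun j => ((v j : ℝ) * (n - 1 - M) + M) / (n - 1) ^ 2 with hq_def
  set p : Fin m → ℝ := fun j => (v j : ℝ) / n with hp_def
  have hq_pos : ∀ j, 0 < q j := by
    intro j
    have h1 := hv1 j
    have h2 : 0 < (v j : ℝ) * (n - 1 - M) + M := by nlinarith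
    rw [hq_def]
    positivity
  have hp_pos : ∀ j, 0 < p j := by
    intro j
    have h1 := hv1 j
    have h2 : 0 < (v j : ℝ) := by linarith
    rw [hp_def]
    positivity
  -- rewrite the learner's expression as q j
  have hq_eq : ∀ j, ((v j : ℝ) - 1) / (n - 1) +
      (1 - M * (((v j : ℝ) - 1) / (n - 1))) / (n - 1) = q j := by
    intro j
    rw [hq_def]
    field_simp
    ring
  have hrw : (∑ j, ((v j : ℝ) / n) *
        Real.log (((v j : ℝ) / n) /
          (((v j : ℝ) - 1) / (n - 1) +
            (1 - M * (((v j : ℝ) - 1) / (n - 1))) / (n - 1))))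
      = ∑ j, p j * Real.log (p j / q j) := by
    apply Finset.sum_congr rfl
    intro j _
    rw [hq_eq j, hp_def]
  rw [hrw]
  -- sum of q
  have hcard : (Finset.univ : Finset (Fin m)).card = m := by simp
  have hSq : ∑ j, q j = (n * (n - 1 - M) + M * M) / (n - 1) ^ 2 := by
    rw [hq_def]
    rw [← Finset.sum_div]
    congr 1
    rw [Finset.sum_add_distrib, ← Finset.sum_mul, hsumR]
    simp [hcard, hM_def]
  have hSp : ∑ j, p j = 1 := by
    rw [hp_def, ← Finset.sum_div, hsumR, div_self hn0.ne']
  -- sum of (p - q)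
  have hSpq : ∑ j, (p j - q j) = (M - 1) * (n - M - 1) / (n - 1) ^ 2 := by
    rw [Finset.sum_sub_distrib, hSp, hSq]
    field_simp
    ring
  -- lower bound for the regret
  have hlow : ∑ j, (p j - q j) ≤ ∑ j, p j * Real.log (p j / q j) :=
    Finset.sum_le_sum fun j _ => (log_ratio_bounds (hp_pos j) (hq_pos j)).1
  have hup : ∑ j, p j * Real.log (p j / q j) ≤
      ∑ j, (p j - q j) + ∑ j, (p j - q j) ^ 2 / q j := by
    rw [← Finset.sum_add_distrib]
    exact Finset.sum_le_sum fun j _ => (log_ratio_bounds (hp_pos j) (hq_pos j)).2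
  -- pointwise bound for the quadratic term
  have hquad : ∀ j, (p j - q j) ^ 2 / q j ≤ 16 * M ^ 2 * (M + 2) / n ^ 2 := by
    intro j
    set w : ℝ := (v j : ℝ) with hw_def
    have hw1 : (1:ℝ) ≤ w := hv1 j
    have hwn : w ≤ n := hvn j
    have hqj : q j = (w * (n - 1 - M) + M) / (n - 1) ^ 2 := by rw [hq_def]
    have hpq : p j - q j = (w * ((M - 1) * n + 1) - M * n) / (n * (n - 1) ^ 2) := by
      rw [hp_def, hq_def]
      field_simp
      ring
    set D : ℝ := w * ((M - 1) * n + 1) - M * n with hD_def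
    set E : ℝ := w * (n - 1 - M) + M with hE_def
    have main : D ^ 2 ≤ 16 * M ^ 2 * (M + 2) * E * (n - 1) ^ 2 := by
      have := quad_poly_bound hM2 hnM hw1 hwn
      rw [hD_def, hE_def]; nlinarith [this]
    rw [div_le_div_iff₀ (hq_pos j) (by positivity), hpq, hqj]
    have e1 : (D / (n * (n - 1) ^ 2)) ^ 2 * n ^ 2 = D ^ 2 / (n - 1) ^ 4 := by
      field_simp
    have e2 : 16 * M ^ 2 * (M + 2) * (E / (n - 1) ^ 2) =
        (16 * M ^ 2 * (M + 2) * E * (n - 1) ^ 2) / (n - 1) ^ 4 := by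
      field_simp
    rw [e1, e2]
    exact (div_le_div_iff_of_pos_right (by positivity)).mpr main
  -- sum of the quadratic terms
  have hquadsum : ∑ j, (p j - q j) ^ 2 / q j ≤ M * (16 * M ^ 2 * (M + 2) / n ^ 2) := by
    calc ∑ j, (p j - q j) ^ 2 / q j
        ≤ ∑ _j : Fin m, 16 * M ^ 2 * (M + 2) / n ^ 2 :=
          Finset.sum_le_sum fun j _ => hquad j
      _ = M * (16 * M ^ 2 * (M + 2) / n ^ 2) := by
          rw [Finset.sum_const, hcard, nsmul_eq_mul, hM_def]
  -- bounds on the main sum S = (M-1)(n-M-1)/(n-1)^2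
  have hS_ub : (M - 1) * (n - M - 1) / (n - 1) ^ 2 ≤ (M - 1) / n :=
    (main_sum_bounds hM2 hnM).2
  have hS_lb : (M - 1) / n - 4 * M ^ 2 / n ^ 2 ≤ (M - 1) * (n - M - 1) / (n - 1) ^ 2 :=
    (main_sum_bounds hM2 hnM).1
  -- assemble
  rw [abs_le]
  have hc1 : 4 * M ^ 2 / n ^ 2 ≤ 40 * M ^ 4 / n ^ 2 :=
    (div_le_div_iff_of_pos_right (by positivity)).mpr (const_bounds hM2).1
  have hc2 : M * (16 * M ^ 2 * (M + 2) / n ^ 2) ≤ 40 * M ^ 4 / n ^ 2 := by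
    rw [mul_div_assoc']
    exact (div_le_div_iff_of_pos_right (by positivity)).mpr (const_bounds hM2).2
  constructor
  · have h := hlow
    rw [hSpq] at h
    linarith [hS_lb, hc1, h]
  · have h := hup
    rw [hSpq] at h
    linarith [hS_ub, hc2, hquadsum, h]
end

section
/- For the multinomial leave-one-out setting with alphabet size m ≥ 2, if a learner uses the plug-in empirical estimator q(j | e) = e(j)/(N-1), then for any count vector v with all entries v(j) ≥ 2 and parameters θ(j) = v(j)/N, the regret equals Σ_j -log(1 - (1-θ(j))/((N-1)θ(j))), and if all θ(j) are bounded below by a constant c > 0 independent of N, this regret equals (m-1)/N + o(1/N) as N → ∞. -/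
open Finset Filter

lemma aux_tendsto_one : Tendsto (fun t : ℝ => t * (Real.log t - Real.log (t - 1))) atTop (nhds 1) := by
  have h1 : Tendsto (fun x : ℝ => x * Real.log (1 + 1 / x)) atTop (nhds 1) :=
    Real.tendsto_mul_log_one_add_div_atTop 1
  have hsub : Tendsto (fun t : ℝ => t - 1) atTop atTop :=
    tendsto_atTop_add_const_right _ (-1) tendsto_id |>.congr (fun x => by simp [sub_eq_add_neg])
  have h2 : Tendsto (fun t : ℝ => (t - 1) * Real.log (1 + 1 / (t - 1))) atTop (nhds 1) :=
    h1.comp hsub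
  have h3 : Tendsto (fun t : ℝ => t / (t - 1)) atTop (nhds 1) := by
    have hz : Tendsto (fun t : ℝ => 1 / (t - 1)) atTop (nhds 0) :=
      tendsto_inv_atTop_zero.comp hsub |>.congr (by intro x; simp [one_div])
    have h4 := hz.const_add (1 : ℝ)
    simp only [add_zero] at h4
    refine h4.congr' ?_
    filter_upwards [eventually_gt_atTop (1 : ℝ)] with t ht
    have : t - 1 ≠ 0 := by linarith
    field_simp
    ring
  have hmul := h3.mul h2
  rw [one_mul] at hmul
  refine hmul.congr' ?_
  filter_upwards [eventually_gt_atTop (1 : ℝ)] with t ht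
  have ht1 : t - 1 ≠ 0 := by linarith
  have ht0 : t ≠ 0 := by linarith
  have hlog : Real.log (1 + 1 / (t - 1)) = Real.log t - Real.log (t - 1) := by
    rw [show (1 : ℝ) + 1 / (t - 1) = t / (t - 1) by field_simp; ring, Real.log_div ht0 ht1]
  rw [hlog]
  field_simp

/-- For the plug-in empirical estimator `q(j|e) = e(j)/(N-1)` in the
multinomial leave-one-out setting: (a) for any count vector `v` with all entries `≥ 2`,
the regret equals `-∑_j θ_j·log(1 - (1-θ_j)/((N-1)·θ_j))` with `θ_j = v(j)/N`; and
(b) along any sequence of count vectors whose empirical frequencies are bounded below by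
a constant `c > 0`, the regret is `(m-1)/N + o(1/N)`, i.e. `N·R_N → m-1`. -/
theorem multinomial_plug_in_regret (m : ℕ) (hm : 2 ≤ m) :
    (∀ N : ℕ, ∀ v : Fin m → ℕ, 2 ≤ N → (∑ j, v j) = N → (∀ j, 2 ≤ v j) →
      (∑ j, ((v j : ℝ) / N) *
          Real.log (((v j : ℝ) / N) / (((v j : ℝ) - 1) / ((N : ℝ) - 1))))
        = -∑ j, ((v j : ℝ) / N) *
            Real.log (1 - (1 - (v j : ℝ) / N) / (((N : ℝ) - 1) * ((v j : ℝ) / N)))) ∧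
    (∀ c : ℝ, 0 < c → ∀ v : ℕ → Fin m → ℕ,
      (∀ N, (∑ j, v N j) = N) → (∀ N j, 2 ≤ N → c ≤ (v N j : ℝ) / N) →
      Tendsto (fun N : ℕ => (N : ℝ) *
          ∑ j, ((v N j : ℝ) / N) *
            Real.log (((v N j : ℝ) / N) / (((v N j : ℝ) - 1) / ((N : ℝ) - 1))))
        atTop (nhds ((m : ℝ) - 1))) := by
  constructor
  · intro N v hN hsum hv
    rw [← Finset.sum_neg_distrib]
    refine Finset.sum_congr rfl fun j _ => ?_
    have hN2 : (2 : ℝ) ≤ (N : ℝ) := by exact_mod_cast hN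
    have hN0 : (N : ℝ) ≠ 0 := by linarith
    have hN1 : (N : ℝ) - 1 ≠ 0 := by linarith
    have hv2 : (2 : ℝ) ≤ (v j : ℝ) := by exact_mod_cast hv j
    have hx0 : (v j : ℝ) ≠ 0 := by linarith
    have hx1 : (v j : ℝ) - 1 ≠ 0 := by linarith
    have hinner : 1 - (1 - (v j : ℝ) / N) / (((N : ℝ) - 1) * ((v j : ℝ) / N))
        = ((N : ℝ) * ((v j : ℝ) - 1)) / (((N : ℝ) - 1) * (v j : ℝ)) := by
      field_simp
      ring
    have harg : ((v j : ℝ) / N) / (((v j : ℝ) - 1) / ((N : ℝ) - 1))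
        = (1 - (1 - (v j : ℝ) / N) / (((N : ℝ) - 1) * ((v j : ℝ) / N)))⁻¹ := by
      rw [hinner, inv_div]
      field_simp
    rw [harg, Real.log_inv]
    ring
  · intro c hc v hsum hlb
    have key : ∀ᶠ N : ℕ in atTop,
        (∑ j, (v N j : ℝ) * (Real.log (v N j) - Real.log ((v N j : ℝ) - 1)))
          - (N : ℝ) * (Real.log N - Real.log ((N : ℝ) - 1))
        = (N : ℝ) * ∑ j, ((v N j : ℝ) / N) *
            Real.log (((v N j : ℝ) / N) / (((v N j : ℝ) - 1) / ((N : ℝ) - 1))) := by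
      have h2c : ∀ᶠ N : ℕ in atTop, (2 : ℝ) ≤ c * N :=
        (Tendsto.const_mul_atTop hc tendsto_natCast_atTop_atTop).eventually_ge_atTop 2
      filter_upwards [eventually_ge_atTop 2, h2c] with N hN h2c
      have hN2 : (2 : ℝ) ≤ (N : ℝ) := by exact_mod_cast hN
      have hN0 : (N : ℝ) ≠ 0 := by linarith
      have hNpos : (0 : ℝ) < (N : ℝ) := by linarith
      have hN1 : (N : ℝ) - 1 ≠ 0 := by linarith
      have hvx : ∀ j, (2 : ℝ) ≤ (v N j : ℝ) := by
        intro j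
        have h1 := hlb N j hN
        have h2 : c * N ≤ (v N j : ℝ) := by
          calc c * N ≤ ((v N j : ℝ) / N) * N := by nlinarith
            _ = (v N j : ℝ) := by field_simp
        linarith
      rw [Finset.mul_sum]
      have step : ∀ j : Fin m, (N : ℝ) * (((v N j : ℝ) / N) *
            Real.log (((v N j : ℝ) / N) / (((v N j : ℝ) - 1) / ((N : ℝ) - 1))))
          = (v N j : ℝ) * (Real.log (v N j) - Real.log ((v N j : ℝ) - 1))
            - (v N j : ℝ) * (Real.log N - Real.log ((N : ℝ) - 1)) := by
        intro j
        have hx0 : (v N j : ℝ) ≠ 0 := by linarith [hvx j]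
        have hx1 : (v N j : ℝ) - 1 ≠ 0 := by linarith [hvx j]
        have hlog : Real.log (((v N j : ℝ) / N) / (((v N j : ℝ) - 1) / ((N : ℝ) - 1)))
            = (Real.log (v N j) - Real.log ((v N j : ℝ) - 1))
              - (Real.log N - Real.log ((N : ℝ) - 1)) := by
          rw [Real.log_div (by positivity) (div_ne_zero hx1 hN1),
            Real.log_div hx0 hN0, Real.log_div hx1 hN1]
          ring
        rw [hlog]
        field_simp
      rw [Finset.sum_congr rfl fun j _ => step j, Finset.sum_sub_distrib, ← Finset.sum_mul]
      have hcast : (∑ j, (v N j : ℝ)) = (N : ℝ) := by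
        rw [← Nat.cast_sum, hsum N]
      rw [hcast]
    have hxinf : ∀ j : Fin m, Tendsto (fun N : ℕ => ((v N j : ℝ))) atTop atTop := by
      intro j
      refine tendsto_atTop_mono' _ ?_ (Tendsto.const_mul_atTop hc tendsto_natCast_atTop_atTop)
      filter_upwards [eventually_ge_atTop 2] with N hN
      have hNpos : (0 : ℝ) < N := by
        have : (2 : ℝ) ≤ (N : ℝ) := by exact_mod_cast hN
        linarith
      have h1 := hlb N j hN
      calc c * (N : ℝ) ≤ ((v N j : ℝ) / N) * N := by nlinarith
        _ = (v N j : ℝ) := by field_simp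
    have hterm : ∀ j : Fin m, Tendsto (fun N : ℕ =>
        (v N j : ℝ) * (Real.log (v N j) - Real.log ((v N j : ℝ) - 1))) atTop (nhds 1) :=
      fun j => aux_tendsto_one.comp (hxinf j)
    have hsum1 : Tendsto (fun N : ℕ =>
        ∑ j, (v N j : ℝ) * (Real.log (v N j) - Real.log ((v N j : ℝ) - 1)))
        atTop (nhds (m : ℝ)) := by
      have h := tendsto_finset_sum Finset.univ (fun (j : Fin m) (_ : j ∈ Finset.univ) => hterm j)
      simpa using h
    have hNlog : Tendsto (fun N : ℕ =>
        (N : ℝ) * (Real.log N - Real.log ((N : ℝ) - 1))) atTop (nhds 1) :=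
      aux_tendsto_one.comp tendsto_natCast_atTop_atTop
    exact (hsum1.sub hNlog).congr' key
end

section
/- Let G be a finite graph (a one-inclusion graph on vertex set of realizable binary label sequences of length N) with the property that every nonempty subgraph contains a vertex of degree at most k. Then there exists an assignment of probabilities to the edges such that every vertex's leave-one-out regret is at most (k·log N + k·log 2 + 1 + o(1))/N; in particular the minimax leave-one-out regret is at most k·log(N)/N + o(log(N)/N) as N → ∞. -/
/-!
Peel a `k`-degenerate graph one low-degree vertex at a time; numbering the vertices in the
order they are removed, every vertex has at most `k` neighbours removed after it. Orient each
edge towards the later vertex and give the earlier endpoint probability `1/N`: a vertex pays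
`log N` on at most `k` edges and `-log (1 - 1/N) ≤ 1/(N - 1)` on at most `N` edges, i.e. at
most `k log N + 2` in total.
-/

open Finset Real

lemma neg_log_one_sub_inv_le {x : ℝ} (hx : 1 < x) : -log (1 - x⁻¹) ≤ (x - 1)⁻¹ := by
  have hx₀ : 0 < x := by linarith
  have hpos : 0 < 1 - x⁻¹ := sub_pos.2 (inv_lt_one_of_one_lt₀ hx)
  have h := one_sub_inv_le_log_of_pos hpos
  have heq : (1 - x⁻¹)⁻¹ - 1 = (x - 1)⁻¹ := by
    field_simp [(by linarith : x - 1 ≠ 0)]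
    ring
  linarith

lemma mul_neg_log_one_sub_inv_le_two {x : ℝ} (hx : 2 ≤ x) : x * -log (1 - x⁻¹) ≤ 2 := by
  have hx₁ : 0 < x - 1 := by linarith
  calc x * -log (1 - x⁻¹) ≤ x * (x - 1)⁻¹ :=
        mul_le_mul_of_nonneg_left (neg_log_one_sub_inv_le (by linarith)) (by linarith)
    _ ≤ 2 := by rw [← div_eq_mul_inv, div_le_iff₀ hx₁]; linarith

namespace SimpleGraph

variable {V : Type*} (G : SimpleGraph V) [DecidableRel G.Adj]

theorem exists_injOn_card_adj_lt_le {k : ℕ}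
    (hdegen : ∀ S : Finset V, S.Nonempty → ∃ u ∈ S, #(S.filter (G.Adj u)) ≤ k)
    (S : Finset V) :
    ∃ f : V → ℕ, Set.InjOn f S ∧ ∀ u ∈ S, #{v ∈ S | G.Adj u v ∧ f u < f v} ≤ k := by
  classical
  induction S using Finset.strongInduction with
  | _ S ih =>
    rcases S.eq_empty_or_nonempty with rfl | hS
    · exact ⟨fun _ => 0, by simp, by simp⟩
    obtain ⟨u, hu, huk⟩ := hdegen S hS
    obtain ⟨f, hinj, hf⟩ := ih (S.erase u) (erase_ssubset hu)
    let g : V → ℕ := fun w => if w = u then 0 else f w + 1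
    have hg : ∀ w, w ≠ u → g w = f w + 1 := fun w hw => if_neg hw
    refine ⟨g, ?_, fun w hw => ?_⟩
    · intro a ha b hb hab
      by_cases hau : a = u <;> by_cases hbu : b = u
      · rw [hau, hbu]
      all_goals simp only [g, hau, hbu, if_true, if_false] at hab
      · omega
      · omega
      · exact hinj (mem_erase.2 ⟨hau, ha⟩) (mem_erase.2 ⟨hbu, hb⟩) (by omega)
    by_cases hwu : w = u
    · subst hwu
      exact (card_le_card fun v hv => by simp_all).trans huk
    refine le_trans (card_le_card fun v hv => ?_) (hf w (mem_erase.2 ⟨hwu, hw⟩))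
    obtain ⟨hvS, hadj, hlt⟩ := mem_filter.1 hv
    have hvu : v ≠ u := by rintro rfl; simp [g, hwu] at hlt
    rw [hg w hwu, hg v hvu] at hlt
    exact mem_filter.2 ⟨mem_erase.2 ⟨hvu, hvS⟩, hadj, by omega⟩

variable [Fintype V]

theorem sum_neg_log_ite_lt_le (f : V → ℕ) {k N : ℕ} (hN : 2 ≤ N) (u : V)
    (hdeg : G.degree u ≤ N) (hlater : #{v ∈ G.neighborFinset u | f u < f v} ≤ k) :
    ∑ v ∈ G.neighborFinset u, -log (if f u < f v then (N : ℝ)⁻¹ else 1 - (N : ℝ)⁻¹)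
      ≤ k * log N + 2 := by
  have hN' : (2 : ℝ) ≤ N := by exact_mod_cast hN
  have hearlier : (#{v ∈ G.neighborFinset u | ¬f u < f v} : ℝ) ≤ N := by
    exact_mod_cast ((card_filter_le _ _).trans_eq (G.card_neighborFinset_eq_degree u)).trans hdeg
  simp only [apply_ite log, neg_ite]
  rw [sum_ite, sum_const, sum_const, nsmul_eq_mul, nsmul_eq_mul, log_inv, neg_neg]
  have hlogN : 0 ≤ log N := log_nonneg (by linarith)
  have hinv₀ : 0 ≤ (N : ℝ)⁻¹ := by positivity
  have hinv₁ : (N : ℝ)⁻¹ ≤ 1 := inv_le_one_of_one_le₀ (by linarith)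
  have hcost : 0 ≤ -log (1 - (N : ℝ)⁻¹) := neg_nonneg.2 (log_nonpos (by linarith) (by linarith))
  gcongr ?_ + ?_
  · exact mul_le_mul_of_nonneg_right (by exact_mod_cast hlater) hlogN
  · exact (mul_le_mul_of_nonneg_right hearlier hcost).trans (mul_neg_log_one_sub_inv_le_two hN')

end SimpleGraph

/-- If every nonempty (induced) subgraph of the finite one-inclusion graph `G`
contains a vertex of degree at most `k` (i.e. `G` is `k`-degenerate), and every degree is
at most `N`, then there is an edge-probability assignment under which every vertex's
leave-one-out regret is at most `(k·log N + k·log 2 + 2)/N`; in particular the minimax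
leave-one-out regret is at most `k·log(N)/N + o(log N / N)`. -/
theorem degenerate_graph_regret_bound {V : Type*} [Fintype V] (G : SimpleGraph V)
    [DecidableRel G.Adj] (N k : ℕ) (hN : 2 ≤ N)
    (hdegN : ∀ u, G.degree u ≤ N)
    (hdegen : ∀ S : Finset V, S.Nonempty →
      ∃ u ∈ S, (S.filter (G.Adj u)).card ≤ k) :
    ∃ p : V → V → ℝ,
      (∀ u v, G.Adj u v → p u v ∈ Set.Ioo (0 : ℝ) 1 ∧ p u v + p v u = 1) ∧
      ∀ u, (1 / (N : ℝ)) * ∑ v ∈ G.neighborFinset u, -Real.log (p u v)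
        ≤ ((k : ℝ) * Real.log N + k * Real.log 2 + 2) / N := by
  classical
  obtain ⟨f, hinj, hlater⟩ := G.exists_injOn_card_adj_lt_le hdegen univ
  have hN₁ : (1 : ℝ) < N := by exact_mod_cast hN
  have hinv₀ : 0 < (N : ℝ)⁻¹ := by positivity
  have hinv₁ : (N : ℝ)⁻¹ < 1 := inv_lt_one_of_one_lt₀ hN₁
  refine ⟨fun u v => if f u < f v then (N : ℝ)⁻¹ else 1 - (N : ℝ)⁻¹, fun u v huv => ?_, fun u => ?_⟩
  · have hne : f u ≠ f v := fun h => G.ne_of_adj huv (hinj (mem_univ u) (mem_univ v) h)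
    rcases hne.lt_or_gt with h | h
    · simp only [h, h.not_gt, if_true, if_false]
      exact ⟨⟨hinv₀, hinv₁⟩, by ring⟩
    · simp only [h, h.not_gt, if_true, if_false]
      exact ⟨⟨by linarith, by linarith⟩, by ring⟩
  have hsum := G.sum_neg_log_ite_lt_le f hN u (hdegN u) <|
    (card_le_card fun v hv => by simp_all).trans (hlater u (mem_univ u))
  have hlog2 : 0 ≤ (k : ℝ) * log 2 := by positivity
  rw [one_div_mul_eq_div]
  gcongr
  linarith
end

section
/- If a binary deterministic hypothesis class has VC dimension d, then for every feature sequence x^N the minimax leave-one-out log-loss regret satisfies R*_loo ≤ 2d·log(N)/N + o(log(N)/N). -/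
open Finset

namespace VCproof

variable {N : ℕ}

noncomputable def flp (y : Fin N → Bool) (t : Fin N) : Fin N → Bool :=
  Function.update y t (!y t)

lemma flp_apply_same (y : Fin N → Bool) (t : Fin N) : flp y t t = !y t := by
  simp [flp]

lemma flp_apply_ne (y : Fin N → Bool) (t s : Fin N) (h : s ≠ t) : flp y t s = y s := by
  simp [flp, Function.update_of_ne h]

lemma flp_flp (y : Fin N → Bool) (t : Fin N) : flp (flp y t) t = y := by
  funext s
  by_cases h : s = t
  · subst h; simp [flp]
  · simp [flp, Function.update_of_ne h]

lemma flp_ne (y : Fin N → Bool) (t : Fin N) : flp y t ≠ y := by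
  intro h
  have := congrFun h t
  simp [flp] at this

def Shat (V : Finset (Fin N → Bool)) (s : Finset (Fin N)) : Prop :=
  ∀ f : Fin N → Bool, ∃ y ∈ V, ∀ a ∈ s, y a = f a

def VCle (V : Finset (Fin N → Bool)) (d : ℕ) : Prop :=
  ∀ s : Finset (Fin N), Shat V s → s.card ≤ d

lemma VCle_mono {V W : Finset (Fin N → Bool)} {d : ℕ} (h : W ⊆ V) (hV : VCle V d) :
    VCle W d := by
  intro s hs
  exact hV s (fun f => by obtain ⟨y, hy, hy2⟩ := hs f; exact ⟨y, h hy, hy2⟩)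

noncomputable def ec (s : Finset (Fin N)) (V : Finset (Fin N → Bool)) : ℕ :=
  ∑ y : Fin N → Bool, ∑ j ∈ s, (if y ∈ V ∧ flp y j ∈ V then 1 else 0)

lemma card_le_one_of_VCle_zero {V : Finset (Fin N → Bool)} (hV : VCle V 0) :
    ∀ y ∈ V, ∀ z ∈ V, y = z := by
  intro y hy z hz
  by_contra hne
  obtain ⟨t, ht⟩ := Function.ne_iff.mp hne
  have hsh : Shat V {t} := by
    intro f
    by_cases hf : y t = f t
    · exact ⟨y, hy, by simpa using hf⟩
    · refine ⟨z, hz, ?_⟩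
      intro a ha
      simp only [Finset.mem_singleton] at ha
      subst ha
      cases hy2 : y a <;> cases hz2 : z a <;> cases hf2 : f a <;> simp_all
  have := hV {t} hsh
  simp at this

lemma ec_eq_zero_of_VCle_zero (s : Finset (Fin N)) {V : Finset (Fin N → Bool)}
    (hV : VCle V 0) : ec s V = 0 := by
  unfold ec
  refine Finset.sum_eq_zero (fun y _ => Finset.sum_eq_zero (fun j _ => ?_))
  rw [if_neg]
  rintro ⟨hy, hf⟩
  exact flp_ne y j (card_le_one_of_VCle_zero hV _ hf _ hy)

section Split

variable (i : Fin N) (V : Finset (Fin N → Bool))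

noncomputable def V0 : Finset (Fin N → Bool) := V.filter (fun y => y i = false)
noncomputable def V1 : Finset (Fin N → Bool) := V.filter (fun y => y i = true)
noncomputable def proj (y : Fin N → Bool) : Fin N → Bool := Function.update y i false
noncomputable def V1' : Finset (Fin N → Bool) := (V1 i V).image (proj i)
noncomputable def Wdn : Finset (Fin N → Bool) := V0 i V ∪ V1' i V
noncomputable def Idn : Finset (Fin N → Bool) := V0 i V ∩ V1' i V

lemma proj_injOn : Set.InjOn (proj i) {y | y i = true} := by
  intro y hy z hz h
  funext a
  by_cases ha : a = i
  · subst ha; rw [hy, hz]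
  · have := congrFun h a
    simpa [proj, Function.update_of_ne ha] using this

lemma mem_V1'_iff (y : Fin N → Bool) :
    y ∈ V1' i V ↔ y i = false ∧ Function.update y i true ∈ V := by
  constructor
  · intro hmem
    obtain ⟨z, hz, rfl⟩ := Finset.mem_image.mp hmem
    simp only [V1, Finset.mem_filter] at hz
    constructor
    · simp [proj]
    · have : Function.update (proj i z) i true = z := by
        funext a
        by_cases ha : a = i
        · subst ha; simp [hz.2]
        · simp [proj, Function.update_of_ne ha]
      rw [this]; exact hz.1
  · rintro ⟨h1, h2⟩
    refine Finset.mem_image.mpr ⟨Function.update y i true, ?_, ?_⟩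
    · simp [V1, h2]
    · funext a
      by_cases ha : a = i
      · subst ha; simp [proj, h1]
      · simp [proj, Function.update_of_ne ha]

lemma card_split : V.card = (Wdn i V).card + (Idn i V).card := by
  have h1 : (Wdn i V).card + (Idn i V).card = (V0 i V).card + (V1' i V).card :=
    Finset.card_union_add_card_inter _ _
  have h2 : (V1' i V).card = (V1 i V).card := by
    apply Finset.card_image_of_injOn
    intro y hy z hz h
    simp only [V1, Finset.mem_filter, Finset.mem_coe] at hy hz
    exact proj_injOn i hy.2 hz.2 h
  have h3 : (V0 i V).card + (V1 i V).card = V.card := by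
    have key := Finset.card_filter_add_card_filter_not (s := V)
      (p := fun y => y i = false)
    have heq : V.filter (fun y => ¬ y i = false) = V1 i V := by
      ext y
      simp only [V1, Finset.mem_filter]
      cases h : y i <;> simp
    rw [heq] at key
    simpa only [V0] using key
  omega

lemma mem_Idn_iff (y : Fin N → Bool) :
    y ∈ Idn i V ↔ y i = false ∧ y ∈ V ∧ Function.update y i true ∈ V := by
  simp only [Idn, Finset.mem_inter, V0, Finset.mem_filter, mem_V1'_iff]
  tauto

lemma dir_count :
    (∑ y : Fin N → Bool, if y ∈ V ∧ flp y i ∈ V then 1 else 0) = 2 * (Idn i V).card := by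
  classical
  set T := Finset.univ.filter (fun y : Fin N → Bool => y ∈ V ∧ flp y i ∈ V) with hT
  have hcf : T.card = ∑ y : Fin N → Bool, if y ∈ V ∧ flp y i ∈ V then 1 else 0 :=
    Finset.card_filter _ _
  rw [← hcf]
  have hsplit : T.card = (T.filter (fun y => y i = false)).card
      + (T.filter (fun y => y i = true)).card := by
    have key := Finset.card_filter_add_card_filter_not (s := T)
      (p := fun y => y i = false)
    have heq : T.filter (fun y => ¬ y i = false) = T.filter (fun y => y i = true) := by
      ext y
      simp only [Finset.mem_filter]
      cases h : y i <;> simp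
    rw [heq] at key
    exact key.symm
  have hT0 : T.filter (fun y => y i = false) = Idn i V := by
    ext y
    simp only [hT, Finset.mem_filter, Finset.mem_univ, true_and, mem_Idn_iff]
    constructor
    · rintro ⟨⟨h1, h2⟩, h3⟩
      refine ⟨h3, h1, ?_⟩
      have : flp y i = Function.update y i true := by
        rw [flp, h3]; simp
      rwa [this] at h2
    · rintro ⟨h3, h1, h2⟩
      refine ⟨⟨h1, ?_⟩, h3⟩
      have : flp y i = Function.update y i true := by
        rw [flp, h3]; simp
      rwa [this]
  have hT1 : T.filter (fun y => y i = true)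
      = (Idn i V).image (fun y => Function.update y i true) := by
    ext y
    simp only [hT, Finset.mem_filter, Finset.mem_univ, true_and, Finset.mem_image,
      mem_Idn_iff]
    constructor
    · rintro ⟨⟨h1, h2⟩, h3⟩
      refine ⟨Function.update y i false, ⟨by simp, ?_, ?_⟩, ?_⟩
      · have : flp y i = Function.update y i false := by rw [flp, h3]; simp
        rwa [this] at h2
      · have : Function.update (Function.update y i false) i true = y := by
          funext a
          by_cases ha : a = i
          · subst ha; simp [h3]
          · simp [Function.update_of_ne ha]
        rwa [this]
      · funext a
        by_cases ha : a = i
        · subst ha; simp [h3]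
        · simp [Function.update_of_ne ha]
    · rintro ⟨w, ⟨hw3, hw1, hw2⟩, rfl⟩
      have hyi : Function.update w i true i = true := by simp
      refine ⟨⟨hw2, ?_⟩, hyi⟩
      have : flp (Function.update w i true) i = w := by
        rw [flp, hyi]
        funext a
        by_cases ha : a = i
        · subst ha; simp [hw3]
        · simp [Function.update_of_ne ha]
      rwa [this]
  have hcardT1 : (T.filter (fun y => y i = true)).card = (Idn i V).card := by
    rw [hT1]
    apply Finset.card_image_of_injOn
    intro w hw w' hw' h
    rw [Finset.mem_coe, mem_Idn_iff] at hw hw'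
    funext a
    by_cases ha : a = i
    · subst ha; rw [hw.1, hw'.1]
    · have := congrFun h a
      simpa [Function.update_of_ne ha] using this
  rw [hsplit, hT0, hcardT1]
  exact (two_mul _).symm

lemma ec_insert {s : Finset (Fin N)} (his : i ∉ s) :
    ec (insert i s) V = 2 * (Idn i V).card + (ec s (V0 i V) + ec s (V1 i V)) := by
  have step1 : ∀ y : Fin N → Bool,
      (∑ j ∈ insert i s, if y ∈ V ∧ flp y j ∈ V then 1 else 0)
      = (if y ∈ V ∧ flp y i ∈ V then 1 else 0)
        + ∑ j ∈ s, if y ∈ V ∧ flp y j ∈ V then 1 else 0 := by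
    intro y
    rw [Finset.sum_insert his]
  have h1 : ec (insert i s) V
      = (∑ y : Fin N → Bool, if y ∈ V ∧ flp y i ∈ V then 1 else 0)
        + ∑ y : Fin N → Bool, ∑ j ∈ s, (if y ∈ V ∧ flp y j ∈ V then 1 else 0) := by
    unfold ec
    rw [← Finset.sum_add_distrib]
    exact Finset.sum_congr rfl (fun y _ => step1 y)
  rw [h1, dir_count]
  congr 1
  unfold ec
  rw [← Finset.sum_add_distrib]
  apply Finset.sum_congr rfl
  intro y _
  rw [← Finset.sum_add_distrib]
  apply Finset.sum_congr rfl
  intro j hj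
  have hji : j ≠ i := fun h => his (h ▸ hj)
  have hfi : flp y j i = y i := flp_apply_ne y j i (Ne.symm hji)
  by_cases h1 : y ∈ V <;> by_cases h2 : flp y j ∈ V <;>
    cases hb : y i <;>
    simp [V0, V1, Finset.mem_filter, h1, h2, hfi, hb]

lemma ec_eq_sum_mem (s : Finset (Fin N)) (A : Finset (Fin N → Bool)) :
    ec s A = ∑ y ∈ A, ∑ j ∈ s, if flp y j ∈ A then 1 else 0 := by
  unfold ec
  rw [← Finset.sum_filter_add_sum_filter_not Finset.univ (fun y => y ∈ A)]
  have h2 : ∑ y ∈ Finset.univ.filter (fun y => ¬ y ∈ A),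
      ∑ j ∈ s, (if y ∈ A ∧ flp y j ∈ A then 1 else 0) = 0 := by
    apply Finset.sum_eq_zero
    intro y hy
    simp only [Finset.mem_filter] at hy
    exact Finset.sum_eq_zero (fun j _ => by simp [hy.2])
  rw [h2, add_zero]
  have h3 : Finset.univ.filter (fun y : Fin N → Bool => y ∈ A) = A := by
    ext y; simp
  rw [h3]
  apply Finset.sum_congr rfl
  intro y hy
  apply Finset.sum_congr rfl
  intro j _
  simp [hy]

lemma ec_V1' {s : Finset (Fin N)} (his : i ∉ s) : ec s (V1' i V) = ec s (V1 i V) := by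
  rw [ec_eq_sum_mem, ec_eq_sum_mem, V1']
  rw [Finset.sum_image (f := fun y => ∑ j ∈ s, if flp y j ∈ (V1 i V).image (proj i) then 1 else 0)]
  · apply Finset.sum_congr rfl
    intro y hy
    apply Finset.sum_congr rfl
    intro j hj
    have hji : j ≠ i := fun h => his (h ▸ hj)
    have hyi : y i = true := (Finset.mem_filter.mp hy).2
    have hcomm : flp (proj i y) j = proj i (flp y j) := by
      funext a
      by_cases hai : a = i
      · subst hai
        rw [flp_apply_ne _ _ _ (Ne.symm hji)]
        simp [proj]
      · by_cases haj : a = j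
        · subst haj
          have l1 : flp (proj i y) a a = !(y a) := by
            rw [flp_apply_same]
            simp [proj, Function.update_of_ne hai]
          have l2 : proj i (flp y a) a = !(y a) := by
            simp [proj, Function.update_of_ne hai, flp_apply_same]
          rw [l1, l2]
        · rw [flp_apply_ne _ _ _ haj]
          simp [proj, Function.update_of_ne hai, flp_apply_ne _ _ _ haj]
    rw [hcomm]
    have hfji : flp y j i = y i := flp_apply_ne y j i (Ne.symm hji)
    have hiff : proj i (flp y j) ∈ (V1 i V).image (proj i) ↔ flp y j ∈ V1 i V := by
      constructor
      · intro hmem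
        obtain ⟨z, hz, hzeq⟩ := Finset.mem_image.mp hmem
        have hz2 : z i = true := (Finset.mem_filter.mp hz).2
        have : z = flp y j := proj_injOn i hz2
          (by simp only [Set.mem_setOf_eq]; rw [hfji, hyi]) hzeq
        rwa [← this]
      · intro hmem
        exact Finset.mem_image.mpr ⟨flp y j, hmem, rfl⟩
    simp only [hiff]
  · intro y hy z hz h
    exact proj_injOn i (Finset.mem_filter.mp hy).2 (Finset.mem_filter.mp hz).2 h

lemma ec_union_inter (s : Finset (Fin N)) (A B : Finset (Fin N → Bool)) :
    ec s A + ec s B ≤ ec s (A ∪ B) + ec s (A ∩ B) := by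
  unfold ec
  rw [← Finset.sum_add_distrib, ← Finset.sum_add_distrib]
  apply Finset.sum_le_sum
  intro y _
  rw [← Finset.sum_add_distrib, ← Finset.sum_add_distrib]
  apply Finset.sum_le_sum
  intro j _
  by_cases h1 : y ∈ A <;> by_cases h2 : flp y j ∈ A <;>
    by_cases h3 : y ∈ B <;> by_cases h4 : flp y j ∈ B <;>
    simp [Finset.mem_union, Finset.mem_inter, h1, h2, h3, h4]

lemma w_false : ∀ w ∈ Wdn i V, w i = false := by
  intro w hw
  rcases Finset.mem_union.mp hw with h | h
  · exact (Finset.mem_filter.mp h).2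
  · exact ((mem_V1'_iff i V w).mp h).1

lemma not_mem_of_all_false {A : Finset (Fin N → Bool)} {s : Finset (Fin N)}
    (hfalse : ∀ w ∈ A, w i = false) (hs : Shat A s) : i ∉ s := by
  intro his
  obtain ⟨w, hw, hag⟩ := hs (fun _ => true)
  have := hag i his
  rw [hfalse w hw] at this
  simp at this

lemma VCle_Wdn {d : ℕ} (hV : VCle V d) : VCle (Wdn i V) d := by
  intro s hs
  have his : i ∉ s := not_mem_of_all_false i (w_false i V) hs
  apply hV s
  intro f
  obtain ⟨w, hw, hag⟩ := hs f
  rcases Finset.mem_union.mp hw with h | h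
  · exact ⟨w, (Finset.mem_filter.mp h).1, hag⟩
  · obtain ⟨z, hz, rfl⟩ := Finset.mem_image.mp h
    refine ⟨z, (Finset.mem_filter.mp hz).1, ?_⟩
    intro a ha
    have hai : a ≠ i := fun h' => his (h' ▸ ha)
    have : proj i z a = z a := by simp [proj, Function.update_of_ne hai]
    rw [← this]
    exact hag a ha

lemma Shat_Idn {d : ℕ} (hV : VCle V d) {s : Finset (Fin N)} (hs : Shat (Idn i V) s) :
    s.card + 1 ≤ d := by
  have hfalse : ∀ w ∈ Idn i V, w i = false := fun w hw => ((mem_Idn_iff i V w).mp hw).1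
  have his : i ∉ s := not_mem_of_all_false i hfalse hs
  have hshat : Shat V (insert i s) := by
    intro f
    obtain ⟨w, hw, hag⟩ := hs f
    obtain ⟨hw1, hw2, hw3⟩ := (mem_Idn_iff i V w).mp hw
    cases hfi : f i
    · refine ⟨w, hw2, ?_⟩
      intro a ha
      rcases Finset.mem_insert.mp ha with rfl | ha
      · rw [hw1, hfi]
      · exact hag a ha
    · refine ⟨Function.update w i true, hw3, ?_⟩
      intro a ha
      rcases Finset.mem_insert.mp ha with rfl | ha
      · simp [hfi]
      · have hai : a ≠ i := fun h' => his (h' ▸ ha)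
        rw [Function.update_of_ne hai]
        exact hag a ha
  have := hV (insert i s) hshat
  rwa [Finset.card_insert_of_notMem his] at this

lemma VCle_Idn {d : ℕ} (hV : VCle V (d + 1)) : VCle (Idn i V) d := by
  intro s hs
  have := Shat_Idn i V hV hs
  omega

lemma Idn_empty (hV : VCle V 0) : Idn i V = ∅ := by
  by_contra h
  obtain ⟨w, hw⟩ := Finset.nonempty_of_ne_empty h
  have : Shat (Idn i V) ∅ := fun f => ⟨w, hw, fun a ha => absurd ha (Finset.notMem_empty a)⟩
  have := Shat_Idn i V hV this
  omega

end Split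

lemma hlw : ∀ (s : Finset (Fin N)) (d : ℕ) (V : Finset (Fin N → Bool)),
    VCle V d → ec s V ≤ 2 * d * V.card := by
  intro s
  induction s using Finset.induction_on with
  | empty =>
    intro d V _
    simp [ec]
  | insert i s his ih =>
    intro d V hV
    rw [ec_insert i V his]
    have hsplitV0 : ec s (V0 i V) + ec s (V1 i V) ≤ ec s (Wdn i V) + ec s (Idn i V) := by
      have h1 := ec_union_inter s (V0 i V) (V1' i V)
      rw [ec_V1' i V his] at h1
      exact h1
    have hW : ec s (Wdn i V) ≤ 2 * d * (Wdn i V).card := ih d _ (VCle_Wdn i V hV)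
    have hcard := card_split i V
    cases d with
    | zero =>
      have hIe : Idn i V = ∅ := Idn_empty i V hV
      have hI0 : ec s (Idn i V) = 0 := by rw [hIe]; simp [ec]
      have hIc : (Idn i V).card = 0 := by rw [hIe]; simp
      omega
    | succ d' =>
      have hI : ec s (Idn i V) ≤ 2 * d' * (Idn i V).card :=
        ih d' _ (VCle_Idn i V hV)
      have : 2 * (d' + 1) * V.card
          = 2 * (d' + 1) * (Wdn i V).card + (2 * d' * (Idn i V).card + 2 * (Idn i V).card) := by
        rw [hcard]; ring
      omega

noncomputable def deg (V : Finset (Fin N → Bool)) (y : Fin N → Bool) : ℕ :=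
  (Finset.univ.filter (fun t : Fin N => flp y t ∈ V)).card

lemma ec_univ_eq_sum_deg (V : Finset (Fin N → Bool)) :
    ec Finset.univ V = ∑ y ∈ V, deg V y := by
  rw [ec_eq_sum_mem]
  apply Finset.sum_congr rfl
  intro y _
  exact (Finset.card_filter _ _).symm

lemma exists_min_deg {d : ℕ} {V : Finset (Fin N → Bool)} (hV : VCle V d)
    (hne : V.Nonempty) : ∃ y ∈ V, deg V y ≤ 2 * d := by
  by_contra h
  push_neg at h
  have hlb : (2 * d + 1) * V.card ≤ ∑ y ∈ V, deg V y := by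
    calc (2 * d + 1) * V.card = ∑ _y ∈ V, (2 * d + 1) := by
          rw [Finset.sum_const, smul_eq_mul, mul_comm]
      _ ≤ ∑ y ∈ V, deg V y := Finset.sum_le_sum (fun y hy => h y hy)
  rw [← ec_univ_eq_sum_deg] at hlb
  have hub := hlw Finset.univ d V hV
  have hpos : 0 < V.card := Finset.card_pos.mpr hne
  nlinarith

lemma exists_rank (d : ℕ) : ∀ (n : ℕ) (V : Finset (Fin N → Bool)), V.card ≤ n →
    VCle V d →
    ∃ r : (Fin N → Bool) → ℕ,
      (∀ y ∈ V, ∀ z ∈ V, y ≠ z → r y ≠ r z) ∧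
      (∀ y ∈ V,
        (Finset.univ.filter (fun t : Fin N => flp y t ∈ V ∧ r y < r (flp y t))).card
          ≤ 2 * d) := by
  intro n
  induction n with
  | zero =>
    intro V hcard _
    have : V = ∅ := Finset.card_eq_zero.mp (Nat.le_zero.mp hcard)
    subst this
    exact ⟨fun _ => 0, by simp, by simp⟩
  | succ n ih =>
    intro V hcard hV
    rcases Finset.eq_empty_or_nonempty V with rfl | hne
    · exact ⟨fun _ => 0, by simp, by simp⟩
    obtain ⟨y₀, hy₀, hdeg⟩ := exists_min_deg hV hne
    set V' := V.erase y₀ with hV'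
    have hcard' : V'.card ≤ n := by
      rw [hV', Finset.card_erase_of_mem hy₀]
      omega
    obtain ⟨r', hinj', hdeg'⟩ := ih V' hcard' (VCle_mono (Finset.erase_subset _ _) hV)
    refine ⟨fun y => if y = y₀ then 0 else r' y + 1, ?_, ?_⟩
    · intro y hy z hz hyz
      by_cases h1 : y = y₀ <;> by_cases h2 : z = y₀
      · exact absurd (h1.trans h2.symm) hyz
      · simp [h1, h2]
      · simp [h1, h2]
      · simp only [if_neg h1, if_neg h2]
        intro h
        exact hinj' y (Finset.mem_erase.mpr ⟨h1, hy⟩) z (Finset.mem_erase.mpr ⟨h2, hz⟩)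
          hyz (by omega)
    · intro y hy
      by_cases h1 : y = y₀
      · subst h1
        calc (Finset.univ.filter (fun t : Fin N => flp y t ∈ V ∧ _)).card
            ≤ (Finset.univ.filter (fun t : Fin N => flp y t ∈ V)).card := by
              apply Finset.card_le_card
              intro t ht
              rw [Finset.mem_filter] at ht ⊢
              exact ⟨ht.1, ht.2.1⟩
          _ ≤ 2 * d := hdeg
      · calc (Finset.univ.filter (fun t : Fin N =>
              flp y t ∈ V ∧ (if y = y₀ then 0 else r' y + 1)
                < (if flp y t = y₀ then 0 else r' (flp y t) + 1))).card
            ≤ (Finset.univ.filter (fun t : Fin N =>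
                flp y t ∈ V' ∧ r' y < r' (flp y t))).card := by
              apply Finset.card_le_card
              intro t ht
              rw [Finset.mem_filter] at ht ⊢
              have ht2 := ht.2.1
              have ht3 := ht.2.2
              rw [if_neg h1] at ht3
              by_cases h2 : flp y t = y₀
              · rw [if_pos h2] at ht3; omega
              · rw [if_neg h2] at ht3
                exact ⟨Finset.mem_univ t, Finset.mem_erase.mpr ⟨h2, ht2⟩, by omega⟩
          _ ≤ 2 * d := hdeg' y (Finset.mem_erase.mpr ⟨h1, hy⟩)

end VCproof

open VCproof in
open Classical in
/-- If a binary deterministic hypothesis class has VC dimension at most `d`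
(every shattered finite set has cardinality at most `d`), then for every feature sequence
`x^N` the minimax leave-one-out log-loss regret on the one-inclusion graph is at most
`2d·log(N)/N + o(log(N)/N)`: for every `ε > 0` and all large enough `N`, some
edge-probability assignment gives every realizable labeling regret at most
`(2d + ε)·log(N)/N`. -/
theorem vc_class_loo_regret_upper_bound (d : ℕ) :
    ∀ ε : ℝ, 0 < ε → ∃ N₀ : ℕ, ∀ N : ℕ, N₀ ≤ N →
    ∀ (X : Type) (H : Set (X → Bool)),
      (∀ s : Finset X,
        (∀ f : X → Bool, ∃ h ∈ H, ∀ a ∈ s, h a = f a) → s.card ≤ d) →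
    ∀ x : Fin N → X,
    ∃ p : (Fin N → Bool) → Fin N → ℝ,
      (∀ (y : Fin N → Bool) (t : Fin N),
        (∃ h ∈ H, ∀ i, h (x i) = y i) →
        (∃ h ∈ H, ∀ i, h (x i) = Function.update y t (!y t) i) →
        p y t ∈ Set.Ioo (0 : ℝ) 1 ∧ p y t + p (Function.update y t (!y t)) t = 1) ∧
      (∀ y : Fin N → Bool, (∃ h ∈ H, ∀ i, h (x i) = y i) →
        (1 / (N : ℝ)) * ∑ t : Fin N,
            (if ∃ h ∈ H, ∀ i, h (x i) = Function.update y t (!y t) i then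
              -Real.log (p y t) else 0)
          ≤ (2 * (d : ℝ) + ε) * Real.log N / N) := by
  intro ε hε
  refine ⟨max 2 (⌈Real.exp (2 / ε)⌉₊ + 1), ?_⟩
  intro N hN X H hVC x
  have hN2 : 2 ≤ N := le_trans (le_max_left _ _) hN
  have hNR : (2 : ℝ) ≤ (N : ℝ) := by exact_mod_cast hN2
  have hNpos : (0 : ℝ) < N := by linarith
  have hlogN : 2 / ε ≤ Real.log N := by
    have h1 : (⌈Real.exp (2 / ε)⌉₊ + 1 : ℕ) ≤ N := le_trans (le_max_right _ _) hN
    have h2 : Real.exp (2 / ε) ≤ (N : ℝ) := by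
      calc Real.exp (2 / ε) ≤ (⌈Real.exp (2 / ε)⌉₊ : ℝ) := Nat.le_ceil _
        _ ≤ (N : ℝ) := by exact_mod_cast Nat.le_of_succ_le h1
    rwa [← Real.le_log_iff_exp_le hNpos] at h2
  have hεlog : 2 ≤ ε * Real.log N := by
    rw [div_le_iff₀ hε] at hlogN
    linarith [mul_comm ε (Real.log N)]
  have hlogpos : 0 < Real.log N := by
    by_contra h
    push_neg at h
    nlinarith
  -- the set of realizable labelings
  set V : Finset (Fin N → Bool) :=
    Finset.univ.filter (fun y => ∃ h ∈ H, ∀ i, h (x i) = y i) with hVdef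
  have hmemV : ∀ y : Fin N → Bool, y ∈ V ↔ ∃ h ∈ H, ∀ i, h (x i) = y i := by
    intro y; simp [hVdef]
  have hVCle : VCle V d := by
    intro s hs
    have hinj : Set.InjOn x ↑s := by
      intro i hi j hj hxij
      by_contra hne
      obtain ⟨y, hy, hag⟩ := hs (fun k => decide (k = i))
      obtain ⟨h, _, hh⟩ := (hmemV y).mp hy
      have h1 : y i = true := by rw [hag i hi]; simp
      have h2 : y j = false := by rw [hag j hj]; simp [Ne.symm hne]
      have : y i = y j := by rw [← hh i, ← hh j, hxij]
      rw [h1, h2] at this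
      simp at this
    have himg : ∀ f : X → Bool, ∃ h ∈ H, ∀ a ∈ s.image x, h a = f a := by
      intro f
      obtain ⟨y, hy, hag⟩ := hs (fun k => f (x k))
      obtain ⟨h, hH, hh⟩ := (hmemV y).mp hy
      refine ⟨h, hH, ?_⟩
      intro a ha
      obtain ⟨i, hi, rfl⟩ := Finset.mem_image.mp ha
      rw [hh i, hag i hi]
    have := hVC (s.image x) himg
    rwa [Finset.card_image_of_injOn hinj] at this
  obtain ⟨r, hrinj, hrdeg⟩ := exists_rank d V.card V le_rfl hVCle
  refine ⟨fun y t => if r y < r (flp y t) then 1 / (N : ℝ) else 1 - 1 / N, ?_, ?_⟩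
  · intro y t hy hft
    have hyV : y ∈ V := (hmemV y).mpr hy
    have hfV : flp y t ∈ V := (hmemV _).mpr hft
    have hne : y ≠ flp y t := (flp_ne y t).symm
    have hrne : r y ≠ r (flp y t) := hrinj y hyV (flp y t) hfV hne
    have hinv1 : (0 : ℝ) < 1 / N := by positivity
    have hinv2 : 1 / (N : ℝ) < 1 := by
      rw [div_lt_one hNpos]; linarith
    have hff : flp (flp y t) t = y := flp_flp y t
    by_cases hlt : r y < r (flp y t)
    · constructor
      · show (if r y < r (flp y t) then 1 / (N : ℝ) else 1 - 1 / N) ∈ Set.Ioo (0:ℝ) 1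
        rw [if_pos hlt]
        exact ⟨hinv1, hinv2⟩
      · show (if r y < r (flp y t) then 1 / (N:ℝ) else 1 - 1/N)
          + (if r (flp y t) < r (flp (flp y t) t) then 1 / (N:ℝ) else 1 - 1/N) = 1
        rw [hff, if_pos hlt, if_neg (by omega)]
        ring
    · have hgt : r (flp y t) < r y := by omega
      constructor
      · show (if r y < r (flp y t) then 1 / (N : ℝ) else 1 - 1 / N) ∈ Set.Ioo (0:ℝ) 1
        rw [if_neg hlt]
        constructor <;> [linarith; linarith]
      · show (if r y < r (flp y t) then 1 / (N:ℝ) else 1 - 1/N)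
          + (if r (flp y t) < r (flp (flp y t) t) then 1 / (N:ℝ) else 1 - 1/N) = 1
        rw [hff, if_neg hlt, if_pos hgt]
        ring
  · intro y hy
    have hyV : y ∈ V := (hmemV y).mpr hy
    have hsum1 : ∑ t : Fin N,
        (if ∃ h ∈ H, ∀ i, h (x i) = Function.update y t (!y t) i then
          -Real.log (if r y < r (flp y t) then 1 / (N:ℝ) else 1 - 1/N) else 0)
        = ∑ t ∈ Finset.univ.filter (fun t : Fin N => flp y t ∈ V),
            -Real.log (if r y < r (flp y t) then 1 / (N:ℝ) else 1 - 1/N) := by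
      rw [Finset.sum_filter]
      apply Finset.sum_congr rfl
      intro t _
      have hiff : (∃ h ∈ H, ∀ i, h (x i) = Function.update y t (!y t) i)
          ↔ flp y t ∈ V := Iff.symm (hmemV (flp y t))
      exact if_congr hiff rfl rfl
    rw [hsum1]
    set S := Finset.univ.filter (fun t : Fin N => flp y t ∈ V) with hS
    set g : Fin N → ℝ :=
      fun t => -Real.log (if r y < r (flp y t) then 1/(N:ℝ) else 1 - 1/N) with hg
    have hsplit := Finset.sum_filter_add_sum_filter_not S
      (fun t => r y < r (flp y t)) g
    have hcardplus : (S.filter (fun t => r y < r (flp y t))).card ≤ 2 * d := by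
      refine le_trans (le_of_eq ?_) (hrdeg y hyV)
      rw [hS, Finset.filter_filter]
    have hplus : ∑ t ∈ S.filter (fun t => r y < r (flp y t)), g t
        ≤ 2 * (d:ℝ) * Real.log N := by
      have heach : ∀ t ∈ S.filter (fun t => r y < r (flp y t)),
          g t = Real.log N := by
        intro t ht
        rw [hg]
        simp only
        rw [if_pos (Finset.mem_filter.mp ht).2, one_div, Real.log_inv]
        ring
      rw [Finset.sum_congr rfl heach, Finset.sum_const, nsmul_eq_mul]
      have hcc : ((S.filter (fun t => r y < r (flp y t))).card : ℝ) ≤ 2 * d := by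
        exact_mod_cast hcardplus
      nlinarith [hlogpos.le]
    have hminus : ∑ t ∈ S.filter (fun t => ¬ r y < r (flp y t)), g t ≤ 2 := by
      have h1 : (0:ℝ) < 1 - 1/N := by
        have : 1/(N:ℝ) < 1 := by rw [div_lt_one hNpos]; linarith
        linarith
      have heach : ∀ t ∈ S.filter (fun t => ¬ r y < r (flp y t)),
          g t ≤ 2 / N := by
        intro t ht
        rw [hg]
        simp only
        rw [if_neg (Finset.mem_filter.mp ht).2]
        rw [← Real.log_inv]
        have h2 := Real.log_le_sub_one_of_pos (inv_pos.mpr h1)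
        have hN1 : (0:ℝ) < (N:ℝ) - 1 := by linarith
        have h4 : (1 - 1/(N:ℝ))⁻¹ = (N:ℝ) / (N - 1) := by
          rw [eq_div_iff (by linarith)]
          field_simp
        have h5 : (N:ℝ)/(N-1) - 1 = 1/(N-1) := by
            rw [eq_div_iff hN1.ne', sub_mul, div_mul_cancel₀ _ hN1.ne']; ring
        have h6 : 1/((N:ℝ)-1) ≤ 2 / N := by
          rw [div_le_div_iff₀ hN1 hNpos]
          linarith
        rw [h4] at h2 ⊢
        linarith
      calc ∑ t ∈ S.filter (fun t => ¬ r y < r (flp y t)), g t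
          ≤ (S.filter (fun t => ¬ r y < r (flp y t))).card • (2/(N:ℝ)) :=
            Finset.sum_le_card_nsmul _ _ _ heach
        _ = ((S.filter (fun t => ¬ r y < r (flp y t))).card : ℝ) * (2/N) :=
            nsmul_eq_mul _ _
        _ ≤ (N : ℝ) * (2/N) := by
            have hc : ((S.filter (fun t => ¬ r y < r (flp y t))).card : ℝ) ≤ N := by
              have hc1 : (S.filter (fun t => ¬ r y < r (flp y t))).card ≤ N := by
                calc (S.filter (fun t => ¬ r y < r (flp y t))).card
                    ≤ S.card := Finset.card_filter_le _ _
                  _ ≤ (Finset.univ : Finset (Fin N)).card := Finset.card_filter_le _ _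
                  _ = N := by simp
              exact_mod_cast hc1
            have h2N : (0:ℝ) ≤ 2/N := by positivity
            nlinarith
        _ = 2 := by field_simp
    have htotal : ∑ t ∈ S, g t ≤ 2*(d:ℝ)*Real.log N + 2 := by
      rw [← hsplit]
      linarith
    have hfin : 2*(d:ℝ)*Real.log N + 2 ≤ (2*(d:ℝ) + ε) * Real.log N := by
      nlinarith [hεlog]
    calc (1/(N:ℝ)) * ∑ t ∈ S, g t ≤ (1/(N:ℝ)) * (2*(d:ℝ)*Real.log N + 2) :=
          mul_le_mul_of_nonneg_left htotal (by positivity)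
      _ ≤ (1/(N:ℝ)) * ((2*(d:ℝ) + ε) * Real.log N) :=
          mul_le_mul_of_nonneg_left hfin (by positivity)
      _ = (2 * (d:ℝ) + ε) * Real.log N / N := by ring
end

section
/- For the 'd-unique-values' hypothesis class, the minimax leave-one-out regret is at least d·log(N)/N + o(log(N)/N). Precisely: in the reduced problem where the learner chooses probabilities q_0, q_1, ..., q_{d-1} ∈ (0,1) and the regret of the configuration with i ones (0 ≤ i ≤ d) is R_i = -(i/N)·log(q_{i-1}) - ((N-i)/N)·log(1-q_i) for i < d (with R_0 = -log(1-q_0)) and R_d = -(d/N)·log(q_{d-1}), for every choice of q_0,...,q_{d-1}, max_{0≤i≤d} R_i ≥ d·log(N)/N + o(log(N)/N); equivalently, for every a < d there is N_0 such that for N ≥ N_0, max_i R_i > a·log(N)/N. -/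
/-!
Only the configurations with `d` and `d - 1` ones are needed. With `p = q (d-1)`, keeping `R_d ≤ a log N / N`
forces `p ≥ N^(-a/d)`, while `-log (1 - p) ≥ p` turns `R_{d-1} ≤ a log N / N` into
`(N - d + 1) p ≤ a log N`. Together they give `N^(1 - a/d) ≤ 2 a log N`, which fails for
large `N` because `1 - a/d > 0` and `log` grows slower than every positive power.
-/

/-- Regret of the configuration with `i` ones (`0 ≤ i ≤ d`) in the reduced
`d`-unique-values leave-one-out problem: the learner assigns probability `q k` to a
held-out `1` when the training set contains `k` ones. -/
noncomputable def dUniqueRegret (d N : ℕ) (q : ℕ → ℝ) (i : ℕ) : ℝ :=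
  (if 1 ≤ i then -((i : ℝ) / N) * Real.log (q (i - 1)) else 0) +
  (if i < d then -(((N : ℝ) - i) / N) * Real.log (1 - q i) else 0)

open Real Filter

theorem eventually_mul_log_lt_rpow (c : ℝ) {ε : ℝ} (hε : 0 < ε) :
    ∀ᶠ x : ℝ in atTop, c * log x < x ^ ε := by
  have hδ : 0 < 1 / (|c| + 1) := by positivity
  filter_upwards [(isLittleO_log_rpow_atTop hε).def hδ, eventually_gt_atTop 0] with x hlog hx
  have hxε : 0 < x ^ ε := rpow_pos_of_pos hx ε
  rw [norm_of_nonneg hxε.le, Real.norm_eq_abs] at hlog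
  calc c * log x ≤ |c| * |log x| := by rw [← abs_mul]; exact le_abs_self _
    _ ≤ |c| * (1 / (|c| + 1) * x ^ ε) := by gcongr
    _ < x ^ ε := by
      rw [← mul_assoc, mul_one_div]
      exact mul_lt_of_lt_one_left hxε ((div_lt_one (by positivity)).mpr (lt_add_one _))

theorem rpow_neg_le_of_neg_log_le {x p s : ℝ} (hx : 0 < x) (hp : 0 < p)
    (h : -log p ≤ s * log x) : x ^ (-s) ≤ p := by
  rw [rpow_def_of_pos hx, ← exp_log hp]
  exact exp_le_exp.mpr (by linarith)

namespace DUniqueValues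

variable {d N : ℕ} {q : ℕ → ℝ}

theorem dUniqueRegret_self (hd : 1 ≤ d) :
    dUniqueRegret d N q d = -((d : ℝ) / N) * log (q (d - 1)) := by
  simp [dUniqueRegret, hd]

theorem div_mul_le_dUniqueRegret {i : ℕ} (hi : i < d) (hiN : i ≤ N)
    (hq : ∀ k < d, q k ∈ Set.Ioo (0 : ℝ) 1) :
    ((N : ℝ) - i) / N * q i ≤ dUniqueRegret d N q i := by
  have hprev : 0 ≤ if 1 ≤ i then -((i : ℝ) / N) * log (q (i - 1)) else 0 := by
    split_ifs
    · have hqi := hq (i - 1) (by omega)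
      exact mul_nonneg_of_nonpos_of_nonpos (neg_nonpos.mpr (by positivity))
        (log_nonpos hqi.1.le hqi.2.le)
    · exact le_rfl
  have hqi := hq i hi
  have hlog : log (1 - q i) ≤ -q i := by
    linarith [log_le_sub_one_of_pos (sub_pos.mpr hqi.2)]
  have hcoef : 0 ≤ ((N : ℝ) - i) / N := by
    have : (i : ℝ) ≤ N := by exact_mod_cast hiN
    exact div_nonneg (by linarith) (Nat.cast_nonneg N)
  rw [dUniqueRegret, if_pos hi]
  nlinarith

theorem rpow_neg_le_of_dUniqueRegret_self_le (hd : 1 ≤ d) (hN : 0 < N)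
    (hq : ∀ k < d, q k ∈ Set.Ioo (0 : ℝ) 1) {a : ℝ}
    (h : dUniqueRegret d N q d ≤ a * log N / N) :
    (N : ℝ) ^ (-(a / d)) ≤ q (d - 1) := by
  have hN' : (0 : ℝ) < N := by exact_mod_cast hN
  have hd' : (0 : ℝ) < d := by exact_mod_cast hd
  refine rpow_neg_le_of_neg_log_le hN' (hq (d - 1) (by omega)).1 ?_
  rw [dUniqueRegret_self hd, show -((d : ℝ) / N) * log (q (d - 1)) = d * -log (q (d - 1)) / N
    by ring, div_le_div_iff_of_pos_right hN'] at h
  rw [div_mul_eq_mul_div, le_div_iff₀ hd']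
  linarith

theorem mul_le_of_dUniqueRegret_le {i : ℕ} (hi : i < d) (hiN : i < N)
    (hq : ∀ k < d, q k ∈ Set.Ioo (0 : ℝ) 1) {b : ℝ} (h : dUniqueRegret d N q i ≤ b / N) :
    ((N : ℝ) - i) * q i ≤ b := by
  have hN : (0 : ℝ) < N := by exact_mod_cast (show 0 < N by omega)
  have := (div_mul_le_dUniqueRegret hi hiN.le hq).trans h
  rwa [div_mul_eq_mul_div, div_le_div_iff_of_pos_right hN] at this

end DUniqueValues

open DUniqueValues in
/-- For the `d`-unique-values class, the minimax leave-one-out regret is at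
least `d·log(N)/N + o(log(N)/N)`: for every `a < d`, for all large enough `N`, every
choice of probabilities `q 0, …, q (d-1) ∈ (0,1)` has `max_{0 ≤ i ≤ d} R_i > a·log(N)/N`. -/
theorem d_unique_values_lower_bound (d : ℕ) (hd : 1 ≤ d) (a : ℝ) (ha : a < d) :
    ∃ N₀ : ℕ, ∀ N : ℕ, N₀ ≤ N →
      ∀ q : ℕ → ℝ, (∀ k < d, q k ∈ Set.Ioo (0 : ℝ) 1) →
        ∃ i ≤ d, a * Real.log N / N < dUniqueRegret d N q i := by
  have hs : 0 < 1 - a / d := sub_pos.mpr ((div_lt_one (by exact_mod_cast hd)).mpr ha)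
  obtain ⟨N₀, hN₀⟩ := eventually_atTop.mp
    ((tendsto_natCast_atTop_atTop.eventually (eventually_mul_log_lt_rpow (2 * a) hs)).and
      (eventually_ge_atTop (2 * d)))
  refine ⟨N₀, fun N hN₀N q hq => ?_⟩
  obtain ⟨hgrowth, hNd⟩ := hN₀ N hN₀N
  by_contra! hR
  have hN : (0 : ℝ) < N := by exact_mod_cast (show 0 < N by omega)
  have htop := rpow_neg_le_of_dUniqueRegret_self_le hd (by omega) hq (hR d le_rfl)
  have hpred := mul_le_of_dUniqueRegret_le (by omega) (by omega) hq (hR (d - 1) (by omega))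
  have hM : (N : ℝ) ≤ 2 * ((N : ℝ) - ↑(d - 1)) := by
    have h2d : ((2 * d : ℕ) : ℝ) ≤ N := by exact_mod_cast hNd
    have hpred_le : ((d - 1 : ℕ) : ℝ) ≤ d := by exact_mod_cast Nat.sub_le d 1
    push_cast at h2d
    linarith
  have hpow : (N : ℝ) ^ (1 - a / d) ≤ 2 * a * log N :=
    calc (N : ℝ) ^ (1 - a / d) = N * (N : ℝ) ^ (-(a / d)) := by
          rw [sub_eq_add_neg, rpow_add hN, rpow_one]
      _ ≤ 2 * ((N : ℝ) - ↑(d - 1)) * q (d - 1) :=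
          mul_le_mul hM htop (rpow_pos_of_pos hN _).le (by linarith)
      _ ≤ 2 * a * log N := by linarith
  exact lt_irrefl _ (hgrowth.trans_le hpow)
end

section
/- Divergence of the error recursion: fix m ≥ 2 and ε_0 ∈ (0,1), and define the sequence ε_k by ε_k = ε_0 + k·(ε_{k-1} - ε_0 + ε_{k-1}^2/2)/(m + k - 1) for k ≥ 1. Then ε_k is strictly increasing in k, ε_k > ε_0 for all k ≥ 1, and there exists K such that ε_K ≥ 1. -/
/-- Divergence of the error recursion: for `m ≥ 2` and `ε₀ ∈ (0,1)`, the
sequence defined by `ε_k = ε₀ + k·(ε_{k-1} - ε₀ + ε_{k-1}²/2)/(m + k - 1)` is strictly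
increasing, exceeds `ε₀` for all `k ≥ 1`, and eventually reaches `1`. -/
theorem epsilon_recursion_diverges (m : ℕ) (hm : 2 ≤ m) (ε : ℕ → ℝ)
    (h0 : ε 0 ∈ Set.Ioo (0 : ℝ) 1)
    (hrec : ∀ k : ℕ, 1 ≤ k →
      ε k = ε 0 + (k : ℝ) * (ε (k - 1) - ε 0 + (ε (k - 1)) ^ 2 / 2) / ((m : ℝ) + k - 1)) :
    StrictMono ε ∧ (∀ k : ℕ, 1 ≤ k → ε 0 < ε k) ∧ ∃ K : ℕ, 1 ≤ ε K := by
  obtain ⟨he0, he1⟩ := h0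
  have hm2 : (2:ℝ) ≤ (m:ℝ) := by exact_mod_cast hm
  have hrec' : ∀ n : ℕ, ε (n+1) =
      ε 0 + ((n:ℝ)+1) * (ε n - ε 0 + (ε n)^2/2) / ((m:ℝ) + n) := by
    intro n
    have h := hrec (n+1) (by omega)
    simp only [Nat.add_sub_cancel] at h
    rw [h]
    push_cast
    ring_nf
  have hD : ∀ n : ℕ, (0:ℝ) < (m:ℝ) + n := by
    intro n
    have : (0:ℝ) ≤ (n:ℝ) := Nat.cast_nonneg n
    linarith
  -- key invariant
  have key : ∀ n : ℕ, ε 0 ≤ ε n ∧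
      ((m:ℝ)-1) * (ε n - ε 0) < ((n:ℝ)+1) * (ε n)^2/2 := by
    intro n
    induction n with
    | zero =>
      refine ⟨le_refl _, ?_⟩
      simp only [Nat.cast_zero]
      nlinarith
    | succ n ih =>
      obtain ⟨hge, hP⟩ := ih
      have hr := hrec' n
      have hDn := hD n
      have hn0 : (0:ℝ) ≤ (n:ℝ) := Nat.cast_nonneg n
      have hs0 : 0 < (ε n)^2/2 := by nlinarith
      -- strict increase
      have h2 : (ε n - ε 0) * ((m:ℝ) + n) < ((n:ℝ)+1) * (ε n - ε 0 + (ε n)^2/2) := by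
        nlinarith
      have hstep : ε n < ε (n+1) := by
        have h2' : ε n - ε 0 < ((n:ℝ)+1) * (ε n - ε 0 + (ε n)^2/2) / ((m:ℝ) + n) :=
          (lt_div_iff₀ hDn).mpr h2
        rw [hr]; linarith
      have hge' : ε 0 ≤ ε (n+1) := le_of_lt (lt_of_le_of_lt hge hstep)
      have hsq : (ε n)^2 ≤ (ε (n+1))^2 := by nlinarith
      have h3 : ((m:ℝ)-1) * (((n:ℝ)+1) * (ε n - ε 0 + (ε n)^2/2)) <
          (((n:ℝ)+2) * (ε n)^2/2) * ((m:ℝ) + n) := by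
        nlinarith [mul_lt_mul_of_pos_left hP (show (0:ℝ) < (n:ℝ)+1 by linarith)]
      have h4 : ((m:ℝ)-1) * (((n:ℝ)+1) * (ε n - ε 0 + (ε n)^2/2)) / ((m:ℝ) + n) <
          ((n:ℝ)+2) * (ε n)^2/2 := (div_lt_iff₀ hDn).mpr h3
      have h5 : ε (n+1) - ε 0 = ((n:ℝ)+1) * (ε n - ε 0 + (ε n)^2/2) / ((m:ℝ) + n) := by
        rw [hr]; ring
      refine ⟨hge', ?_⟩
      have : ((m:ℝ)-1) * (ε (n+1) - ε 0) < ((n:ℝ)+2) * (ε n)^2/2 := by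
        rw [h5, ← mul_div_assoc]; exact h4
      have hcast : ((n+1 : ℕ):ℝ) + 1 = (n:ℝ) + 2 := by push_cast; ring
      rw [hcast]
      nlinarith
  -- strict monotonicity
  have hstep : ∀ n : ℕ, ε n < ε (n+1) := by
    intro n
    obtain ⟨hge, hP⟩ := key n
    have hr := hrec' n
    have hDn := hD n
    have hn0 : (0:ℝ) ≤ (n:ℝ) := Nat.cast_nonneg n
    have h2 : (ε n - ε 0) * ((m:ℝ) + n) < ((n:ℝ)+1) * (ε n - ε 0 + (ε n)^2/2) := by
      nlinarith
    have h2' : ε n - ε 0 < ((n:ℝ)+1) * (ε n - ε 0 + (ε n)^2/2) / ((m:ℝ) + n) :=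
      (lt_div_iff₀ hDn).mpr h2
    rw [hr]; linarith
  have smono : StrictMono ε := strictMono_nat_of_lt_succ hstep
  refine ⟨smono, fun k hk => smono (by omega : 0 < k), ?_⟩
  -- divergence
  by_contra hcon
  push_neg at hcon
  set c : ℝ := (ε 0)^2/2 with hc
  have hcpos : 0 < c := by positivity
  obtain ⟨j, hj⟩ := exists_nat_ge ((2*(m:ℝ))/c)
  set k0 : ℕ := m + j with hk0
  have hgrow : ∀ k : ℕ, k0 ≤ k → ε k + c/4 ≤ ε (k+1) := by
    intro k hk
    have hkm : (m:ℝ) ≤ (k:ℝ) := by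
      have : m ≤ k := le_trans (Nat.le_add_right _ _) hk
      exact_mod_cast this
    have hkc : 2*(m:ℝ) ≤ (k:ℝ) * c := by
      have h1 : j ≤ k := le_trans (Nat.le_add_left _ _) hk
      have h2 : (2*(m:ℝ))/c ≤ (k:ℝ) := le_trans hj (by exact_mod_cast h1)
      exact (div_le_iff₀ hcpos).mp h2
    have hδ1 : ε k - ε 0 ≤ 1 := by
      have := hcon k
      linarith
    have hδ0 : 0 ≤ ε k - ε 0 := by linarith [(key k).1]
    have hs : c ≤ (ε k)^2/2 := by
      have h1 : ε 0 ≤ ε k := (key k).1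
      rw [hc]; nlinarith
    have hr := hrec' k
    have hDk := hD k
    have h1 : (ε k + c/4 - ε 0) * ((m:ℝ) + k) ≤
        ((k:ℝ)+1) * (ε k - ε 0 + (ε k)^2/2) := by
      have hA : ((m:ℝ)-1) * (ε k - ε 0) ≤ ((m:ℝ)-1) * 1 :=
        mul_le_mul_of_nonneg_left hδ1 (by linarith)
      have hB : ((k:ℝ)+1) * c ≤ ((k:ℝ)+1) * ((ε k)^2/2) :=
        mul_le_mul_of_nonneg_left hs (by positivity)
      have hC : c * ((m:ℝ)+(k:ℝ)) ≤ c * (2*((k:ℝ)+1)) :=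
        mul_le_mul_of_nonneg_left (by linarith) hcpos.le
      have expand : (ε k + c/4 - ε 0) * ((m:ℝ) + k) =
          ((m:ℝ)-1)*(ε k - ε 0) + ((k:ℝ)+1)*(ε k - ε 0) + c*((m:ℝ)+(k:ℝ))/4 := by ring
      rw [expand]
      linarith [hA, hB, hC, hkc, hcpos]
    have h2 : ε k + c/4 - ε 0 ≤ ((k:ℝ)+1) * (ε k - ε 0 + (ε k)^2/2) / ((m:ℝ) + k) :=
      (le_div_iff₀ hDk).mpr h1
    rw [hr]; linarith
  have hsum : ∀ n : ℕ, ε k0 + (n:ℝ) * (c/4) ≤ ε (k0 + n) := by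
    intro n
    induction n with
    | zero => norm_num
    | succ n ih =>
      have := hgrow (k0 + n) (Nat.le_add_right _ _)
      have hcast : ((n+1 : ℕ):ℝ) = (n:ℝ) + 1 := by push_cast; ring
      rw [hcast]
      have : ε k0 + ((n:ℝ)+1) * (c/4) ≤ ε (k0 + n) + c/4 := by linarith
      calc ε k0 + ((n:ℝ)+1) * (c/4) ≤ ε (k0 + n) + c/4 := this
        _ ≤ ε (k0 + n + 1) := hgrow (k0+n) (Nat.le_add_right _ _)
        _ = ε (k0 + (n+1)) := by rw [Nat.add_assoc]
  obtain ⟨N, hN⟩ := exists_nat_ge (4/c)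
  have hN1 : (1:ℝ) ≤ (N:ℝ) * (c/4) := by
    have h1 : (4:ℝ) ≤ (N:ℝ) * c := (div_le_iff₀ hcpos).mp hN
    have h2 : (N:ℝ) * (c/4) = ((N:ℝ) * c)/4 := by ring
    rw [h2]
    linarith
  have h1 : ε 0 ≤ ε k0 := (key k0).1
  have := hsum N
  have hfinal : 1 < ε (k0 + N) := by linarith
  exact absurd (hcon (k0 + N)) (by linarith)
end

section
/- The minimax leave-one-out regret of the binomial class satisfies R*_loo ≥ (1 - ε)/N for every ε > 0 and all sufficiently large N; more generally, for alphabet size m, R*_loo ≥ (m-1)/N + o(1/N): for any δ > 0 there is N_0 such that for N ≥ N_0, no probability assignment q achieves max over count vectors v of R_loo(v, q) ≤ (m-1)(1-δ)/N. -/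
open Finset

section Aux


variable {m : ℕ}

lemma loo_reindex (hm : 1 ≤ m) (N : ℕ) (hN : 1 ≤ N) (G : (Fin m → ℕ) → Fin m → ℝ) :
    ∑ v ∈ (Fintype.piFinset fun _ : Fin m => Finset.range (N+1)).filter
        (fun v => ∑ j, v j = N),
      ∑ j, (if 0 < v j then G v j else 0) =
    ∑ e ∈ (Fintype.piFinset fun _ : Fin m => Finset.range N).filter
        (fun e => ∑ j, e j = N - 1),
      ∑ j, G (fun i => e i + if i = j then 1 else 0) j := by
  classical
  have : Nonempty (Fin m) := ⟨⟨0, hm⟩⟩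
  rw [← Finset.sum_product', ← Finset.sum_product']
  rw [show (∑ p ∈ ((Fintype.piFinset fun _ : Fin m => Finset.range (N+1)).filter
        (fun v => ∑ j, v j = N)) ×ˢ (univ : Finset (Fin m)),
      (if 0 < p.1 p.2 then G p.1 p.2 else 0)) =
      ∑ p ∈ (((Fintype.piFinset fun _ : Fin m => Finset.range (N+1)).filter
        (fun v => ∑ j, v j = N)) ×ˢ (univ : Finset (Fin m))).filter (fun p => 0 < p.1 p.2),
      G p.1 p.2 from (Finset.sum_filter _ _).symm]
  refine Finset.sum_nbij' (fun p => ((fun i => p.1 i - if i = p.2 then 1 else 0), p.2))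
    (fun p => ((fun i => p.1 i + if i = p.2 then 1 else 0), p.2)) ?_ ?_ ?_ ?_ ?_
  · -- forward: (v,j) with v j > 0 maps into E × univ
    rintro ⟨v, j⟩ hp
    simp only [Finset.mem_filter, Finset.mem_product, Fintype.mem_piFinset,
      Finset.mem_range, Finset.mem_univ, and_true] at hp ⊢
    obtain ⟨⟨hrange, hsum⟩, hpos⟩ := hp
    have hsum' : ∑ i, (v i - if i = j then 1 else 0) = N - 1 := by
      have h1 : ∑ i, (v i - if i = j then 1 else 0) + ∑ i, (if i = j then 1 else 0)
          = ∑ i, v i := by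
        rw [← Finset.sum_add_distrib]
        refine Finset.sum_congr rfl fun i _ => ?_
        by_cases h : i = j
        · subst h; rw [if_pos rfl]; omega
        · simp [h]
      rw [Finset.sum_ite_eq' univ j (fun _ => 1)] at h1
      simp only [Finset.mem_univ, if_true] at h1
      omega
    refine ⟨fun i => ?_, hsum'⟩
    have hle : (v i - if i = j then 1 else 0) ≤ N - 1 := by
      calc (v i - if i = j then 1 else 0)
          ≤ ∑ k, (v k - if k = j then 1 else 0) :=
            Finset.single_le_sum (f := fun k => v k - if k = j then 1 else 0)
              (fun k _ => Nat.zero_le _) (Finset.mem_univ i)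
        _ = N - 1 := hsum'
    omega
  · -- backward: (e,j) maps into filtered V
    rintro ⟨e, j⟩ hp
    simp only [Finset.mem_filter, Finset.mem_product, Fintype.mem_piFinset,
      Finset.mem_range, Finset.mem_univ, and_true] at hp ⊢
    obtain ⟨hrange, hsum⟩ := hp
    have hs : ∑ i, (e i + if i = j then 1 else 0) = N := by
      rw [Finset.sum_add_distrib, Finset.sum_ite_eq' univ j (fun _ => 1)]
      simp only [Finset.mem_univ, if_true]
      omega
    refine ⟨⟨fun i => ?_, hs⟩, by simp⟩
    have := hrange i; split <;> omega
  · rintro ⟨v, j⟩ hp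
    have hpos : 0 < v j := (Finset.mem_filter.mp hp).2
    simp only [Prod.mk.injEq, and_true]
    funext i
    by_cases h : i = j
    · subst h; rw [if_pos rfl]; omega
    · simp [h]
  · rintro ⟨e, j⟩ hp
    simp only [Prod.mk.injEq, and_true]
    funext i
    split <;> omega
  · rintro ⟨v, j⟩ hp
    have hpos : 0 < v j := (Finset.mem_filter.mp hp).2
    dsimp only
    congr 1
    funext i
    by_cases h : i = j
    · subst h; rw [if_pos rfl]; omega
    · simp [h]

end Aux


/-- Gibbs' inequality in unnormalized form. -/
lemma loo_gibbs {m : ℕ} (hm : 1 ≤ m) (Nr : ℝ) (hNr : 0 < Nr) (a q : Fin m → ℝ)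
    (ha : ∀ j, 0 < a j) (hq : ∀ j, 0 < q j) (hqs : ∑ j, q j = 1) (A : ℝ)
    (hA : ∑ j, a j = A) :
    ∑ j, (a j / Nr) * Real.log (A / Nr) ≤ ∑ j, (a j / Nr) * Real.log ((a j / Nr) / q j) := by
  have : Nonempty (Fin m) := ⟨⟨0, hm⟩⟩
  have hA0 : 0 < A := by
    rw [← hA]; exact Finset.sum_pos (fun j _ => ha j) Finset.univ_nonempty
  have hsum0 : ∑ j, (a j / Nr - A * q j / Nr) = 0 := by
    rw [Finset.sum_sub_distrib, ← Finset.sum_div, ← Finset.sum_div, ← Finset.mul_sum,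
      hA, hqs, mul_one, sub_self]
  have hle : ∑ j, (a j / Nr - A * q j / Nr) ≤
      ∑ j, ((a j / Nr) * Real.log ((a j / Nr) / q j) - (a j / Nr) * Real.log (A / Nr)) := by
    refine Finset.sum_le_sum fun j _ => ?_
    have haj := ha j
    have hqj := hq j
    have hx : 0 < a j / (A * q j) := by positivity
    have hlog := Real.one_sub_inv_le_log_of_pos hx
    have heq : (a j / Nr) * Real.log ((a j / Nr) / q j) - (a j / Nr) * Real.log (A / Nr)
        = (a j / Nr) * Real.log (a j / (A * q j)) := by
      rw [← mul_sub, ← Real.log_div (by positivity) (by positivity)]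
      congr 2
      field_simp
    rw [heq]
    have hmul := mul_le_mul_of_nonneg_left hlog (le_of_lt (div_pos haj hNr))
    calc a j / Nr - A * q j / Nr = (a j / Nr) * (1 - (a j / (A * q j))⁻¹) := by
          rw [inv_div]
          field_simp
      _ ≤ (a j / Nr) * Real.log (a j / (A * q j)) := hmul
  have := Finset.sum_sub_distrib (f := fun j => (a j / Nr) * Real.log ((a j / Nr) / q j))
    (g := fun j => (a j / Nr) * Real.log (A / Nr)) (s := univ)
  rw [this] at hle
  linarith [hle, hsum0]

/-- Minimax leave-one-out lower bound for the multinomial class: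
for any `δ > 0` there is `N₀` such that for all `N ≥ N₀`, no probability assignment `q`
(mapping each training count vector to a strictly positive probability distribution on
the alphabet) achieves leave-one-out regret at most `(m-1)(1-δ)/N` for every count
vector `v`; hence `lim inf N·R*_loo ≥ m - 1`. -/
theorem multinomial_loo_lower_bound (m : ℕ) (hm : 2 ≤ m) (δ : ℝ) (hδ : 0 < δ) :
    ∃ N₀ : ℕ, ∀ N : ℕ, N₀ ≤ N →
      ∀ q : (Fin m → ℕ) → Fin m → ℝ,
        (∀ e : Fin m → ℕ, (∑ j, e j) = N - 1 →
          (∀ j, 0 < q e j) ∧ (∑ j, q e j) = 1) →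
        ∃ v : Fin m → ℕ, (∑ j, v j) = N ∧
          ((m : ℝ) - 1) * (1 - δ) / N <
            ∑ j, (if 0 < v j then
              ((v j : ℝ) / N) *
                Real.log (((v j : ℝ) / N) /
                  q (fun i => v i - if i = j then 1 else 0) j)
              else 0) := by
  classical
  refine ⟨⌈((m : ℝ) - 1) / δ⌉₊ + m + 2, ?_⟩
  intro N hN q hq
  have hm1 : (1 : ℕ) ≤ m := le_trans one_le_two hm
  have : Nonempty (Fin m) := ⟨⟨0, hm1⟩⟩
  have hN1 : 1 ≤ N := by omega
  have hNr : (0 : ℝ) < N := by exact_mod_cast Nat.pos_of_ne_zero (by omega)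
  have hmR : (2 : ℝ) ≤ m := by exact_mod_cast hm
  set x : ℝ := ((m : ℝ) - 1) / N with hxdef
  have hx0 : 0 < x := div_pos (by linarith) hNr
  have hxδ : x < δ := by
    have hceil : ((m : ℝ) - 1) / δ ≤ (⌈((m : ℝ) - 1) / δ⌉₊ : ℝ) := Nat.le_ceil _
    have hlt : ((⌈((m : ℝ) - 1) / δ⌉₊ : ℕ) : ℝ) < N := by
      exact_mod_cast (by omega : ⌈((m : ℝ) - 1) / δ⌉₊ < N)
    rw [hxdef, div_lt_iff₀ hNr]
    have h2 : ((m : ℝ) - 1) / δ < N := lt_of_le_of_lt hceil hlt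
    rw [div_lt_iff₀ hδ] at h2
    linarith
  have hB : ((m : ℝ) - 1) * (1 - δ) / N < Real.log (1 + x) := by
    have h1x : (0 : ℝ) < 1 + x := by linarith
    have hlog : x / (1 + x) ≤ Real.log (1 + x) := by
      have h := Real.one_sub_inv_le_log_of_pos h1x
      have hinv : 1 - (1 + x)⁻¹ = x / (1 + x) := by field_simp; ring
      linarith [hinv ▸ h]
    have hlt : (1 - δ) * x < x / (1 + x) := by
      rw [lt_div_iff₀ h1x]
      nlinarith [mul_lt_mul_of_pos_right hxδ hx0, mul_pos (mul_pos hδ hx0) hx0]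
    have hrw : ((m : ℝ) - 1) * (1 - δ) / N = (1 - δ) * x := by rw [hxdef]; ring
    linarith
  set V : Finset (Fin m → ℕ) :=
    (Fintype.piFinset fun _ : Fin m => Finset.range (N + 1)).filter
      (fun v => ∑ j, v j = N) with hVdef
  set E : Finset (Fin m → ℕ) :=
    (Fintype.piFinset fun _ : Fin m => Finset.range N).filter
      (fun e => ∑ j, e j = N - 1) with hEdef
  have hVne : V.Nonempty := by
    refine ⟨fun i => if i = ⟨0, by omega⟩ then N else 0, ?_⟩
    rw [hVdef, Finset.mem_filter]
    constructor
    · rw [Fintype.mem_piFinset]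
      intro i
      rw [Finset.mem_range]
      split <;> omega
    · rw [Finset.sum_ite_eq' univ (⟨0, by omega⟩ : Fin m) (fun _ => N)]
      simp
  have hcardpos : (0 : ℝ) < (V.card : ℝ) := by
    exact_mod_cast Finset.card_pos.mpr hVne
  have hsimp : ∀ (e : Fin m → ℕ) (j : Fin m),
      (fun i => (e i + if i = j then 1 else 0) - if i = j then 1 else 0) = e :=
    fun e j => funext fun i => by split <;> omega
  have hre1 := loo_reindex hm1 N hN1
    (fun v j => ((v j : ℝ) / N) *
      Real.log (((v j : ℝ) / N) / q (fun i => v i - if i = j then 1 else 0) j))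
  have hre2 := loo_reindex hm1 N hN1 (fun v j => ((v j : ℝ) / N))
  have hterm1 : ∀ e ∈ E, ∀ j : Fin m,
      (fun v j => ((v j : ℝ) / N) *
          Real.log (((v j : ℝ) / N) / q (fun i => v i - if i = j then 1 else 0) j))
        (fun i => e i + if i = j then 1 else 0) j
      = (((e j : ℝ) + 1) / N) * Real.log ((((e j : ℝ) + 1) / N) / q e j) := by
    intro e he j
    simp only [hsimp e j, if_true, Nat.cast_add, Nat.cast_one]
  have hre1' : (∑ v ∈ V, ∑ j, (if 0 < v j then
        ((v j : ℝ) / N) * Real.log (((v j : ℝ) / N) /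
          q (fun i => v i - if i = j then 1 else 0) j) else 0))
      = ∑ e ∈ E, ∑ j, (((e j : ℝ) + 1) / N) * Real.log ((((e j : ℝ) + 1) / N) / q e j) :=
    hre1.trans (Finset.sum_congr rfl fun e he =>
      Finset.sum_congr rfl fun j _ => hterm1 e he j)
  have hre2' : (V.card : ℝ) = ∑ e ∈ E, ∑ j, (((e j : ℝ) + 1) / N) := by
    have hL : (∑ v ∈ V, ∑ j, (if 0 < v j then ((v j : ℝ) / N) else 0)) = (V.card : ℝ) := by
      have hone : ∀ v ∈ V, (∑ j, (if 0 < v j then ((v j : ℝ) / N) else 0)) = 1 := by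
        intro v hv
        have hvs : ∑ j, v j = N := (Finset.mem_filter.mp hv).2
        have h1 : (∑ j, (if 0 < v j then ((v j : ℝ) / N) else 0)) = ∑ j, ((v j : ℝ) / N) := by
          refine Finset.sum_congr rfl fun j _ => ?_
          by_cases h : 0 < v j
          · rw [if_pos h]
          · rw [if_neg h]
            have hz : v j = 0 := by omega
            rw [hz]
            simp
        rw [h1, ← Finset.sum_div, ← Nat.cast_sum, hvs]
        exact div_self (ne_of_gt hNr)
      rw [Finset.sum_congr rfl hone, Finset.sum_const, nsmul_eq_mul, mul_one]
    have hR : (∑ e ∈ E, ∑ j, ((((fun i => e i + if i = j then 1 else 0) j : ℕ) : ℝ) / N))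
        = ∑ e ∈ E, ∑ j, (((e j : ℝ) + 1) / N) := by
      refine Finset.sum_congr rfl fun e _ => Finset.sum_congr rfl fun j _ => ?_
      simp only [if_true, Nat.cast_add, Nat.cast_one]
    rw [← hL, hre2, hR]
  have hgibbs : ∀ e ∈ E, (∑ j, (((e j : ℝ) + 1) / N) * Real.log (1 + x)) ≤
      ∑ j, (((e j : ℝ) + 1) / N) * Real.log ((((e j : ℝ) + 1) / N) / q e j) := by
    intro e he
    obtain ⟨hepi, hesum⟩ := Finset.mem_filter.mp he
    obtain ⟨hqpos, hqsum⟩ := hq e hesum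
    have hA : ∑ j, ((e j : ℝ) + 1) = (N : ℝ) + m - 1 := by
      rw [Finset.sum_add_distrib, ← Nat.cast_sum, hesum, Finset.sum_const, nsmul_eq_mul,
        mul_one, Nat.cast_sub hN1, Finset.card_univ, Fintype.card_fin]
      push_cast
      ring
    have h1x : (1 : ℝ) + x = ((N : ℝ) + m - 1) / N := by rw [hxdef]; field_simp; ring
    rw [h1x]
    exact loo_gibbs hm1 N hNr (fun j => (e j : ℝ) + 1) (q e)
      (fun j => by positivity) hqpos hqsum _ hA
  have hsum_lt : (∑ _v ∈ V, (((m : ℝ) - 1) * (1 - δ) / N)) < ∑ v ∈ V, (∑ j, if 0 < v j then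
      ((v j : ℝ) / N) * Real.log (((v j : ℝ) / N) /
        q (fun i => v i - if i = j then 1 else 0) j) else 0) := by
    calc (∑ _v ∈ V, (((m : ℝ) - 1) * (1 - δ) / N))
        = (V.card : ℝ) * (((m : ℝ) - 1) * (1 - δ) / N) := by
          rw [Finset.sum_const, nsmul_eq_mul]
      _ < (V.card : ℝ) * Real.log (1 + x) := mul_lt_mul_of_pos_left hB hcardpos
      _ = ∑ e ∈ E, ∑ j, (((e j : ℝ) + 1) / N) * Real.log (1 + x) := by
          rw [hre2', Finset.sum_mul]
          exact Finset.sum_congr rfl fun e _ => by rw [Finset.sum_mul]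
      _ ≤ ∑ e ∈ E, ∑ j, (((e j : ℝ) + 1) / N) *
            Real.log ((((e j : ℝ) + 1) / N) / q e j) := Finset.sum_le_sum hgibbs
      _ = _ := hre1'.symm
  obtain ⟨v, hvV, hlt⟩ := Finset.exists_lt_of_sum_lt hsum_lt
  exact ⟨v, (Finset.mem_filter.mp hvV).2, hlt⟩
end

section
/- pNML failure for the 1-unique-value class: with N distinct features x_1,...,x_N and training labels all zero, the pNML predictor assigns probability 1/2 to each of y_N = 0 and y_N = 1, so its regret relative to the best hypothesis in hindsight is log(2), independent of N. -/
open Classical in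
/-- pNML failure for the 1-unique-value class (hypotheses `θ` label `y = 1`
exactly at `x = θ`): with `n + 1` distinct features, training labels all zero and the test
at the last feature, both candidate test labels attain maximum likelihood `1`, so the
pNML predictor assigns probability `1/2` to each label and its regret relative to the
best hypothesis in hindsight is `log 2`, independent of `n`. -/
theorem pNML_fails_one_unique_value (X : Type*) [Infinite X] (n : ℕ)
    (x : Fin (n + 1) → X) (hx : Function.Injective x) :
    let num : Bool → ℝ := fun b =>
      if ∃ θ : X, (∀ i : Fin (n + 1), i ≠ Fin.last n → x i ≠ θ) ∧
          ((x (Fin.last n) = θ) ↔ b = true) then 1 else 0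
    (num true = 1 ∧ num false = 1) ∧
    (∀ b, num b / (num false + num true) = 1 / 2) ∧
    -Real.log (num false / (num false + num true)) = Real.log 2 := by
  intro num
  have ht : num true = 1 := by
    have : ∃ θ : X, (∀ i : Fin (n + 1), i ≠ Fin.last n → x i ≠ θ) ∧
        ((x (Fin.last n) = θ) ↔ true = true) :=
      ⟨x (Fin.last n), fun i hi h => hi (hx h), by simp⟩
    simp only [num, if_pos this]
  have hf : num false = 1 := by
    obtain ⟨θ, hθ⟩ := (Finset.univ.image x).exists_notMem
    simp only [Finset.mem_image, Finset.mem_univ, true_and, not_exists] at hθ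
    have : ∃ θ : X, (∀ i : Fin (n + 1), i ≠ Fin.last n → x i ≠ θ) ∧
        ((x (Fin.last n) = θ) ↔ false = true) :=
      ⟨θ, fun i _ => hθ i, by simp [hθ (Fin.last n)]⟩
    simp only [num, if_pos this]
  refine ⟨⟨ht, hf⟩, ?_, ?_⟩
  · intro b
    have : num b = 1 := by cases b <;> assumption
    rw [this, ht, hf]; norm_num
  · rw [ht, hf]
    rw [show (1 : ℝ) / (1 + 1) = 2⁻¹ by norm_num, Real.log_inv]
    ring
end

section
/- Equalizer property in the binomial case (m = 2): any probability assignment q: {0,1,...,N-1} → (0,1) (where q(k) is the probability assigned to '1' after seeing k ones among N-1 training samples) that minimizes the maximum over v ∈ {0,...,N} of R(v,q) = (v/N)·log((v/N)/q(v-1)) + ((N-v)/N)·log(((N-v)/N)/(1 - q(v))) (terms with zero coefficient omitted) must satisfy R(v, q) = R(v', q) for all v, v' ∈ {0,...,N}. Equivalently: if q is such that R(v,q) is not constant in v, then there exists q' with max_v R(v, q') < max_v R(v, q). -/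
open Finset

/-- Binomial leave-one-out regret of the sequence with `v` ones, under the assignment
`q k` = probability of `1` after seeing `k` ones among `N-1` training samples
(terms with zero coefficient omitted). -/
noncomputable def binomialLooRegret (N : ℕ) (q : ℕ → ℝ) (v : ℕ) : ℝ :=
  (if 1 ≤ v then ((v : ℝ) / N) * Real.log (((v : ℝ) / N) / q (v - 1)) else 0) +
  (if v < N then (((N : ℝ) - v) / N) *
      Real.log ((((N : ℝ) - v) / N) / (1 - q v)) else 0)

lemma regret_update_ne (N k w : ℕ) (q : ℕ → ℝ) (t : ℝ)
    (h1 : w ≠ k + 1) (h2 : w ≠ k) :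
    binomialLooRegret N (Function.update q k t) w = binomialLooRegret N q w := by
  unfold binomialLooRegret
  by_cases hw : 1 ≤ w
  · rw [Function.update_of_ne (show w - 1 ≠ k by omega), Function.update_of_ne h2]
  · simp only [if_neg hw]
    rw [Function.update_of_ne h2]

lemma regret_k_formula (N k : ℕ) (hk : k < N) (q : ℕ → ℝ) (t : ℝ)
    (ht : t < 1) (hqk : q k < 1) :
    binomialLooRegret N (Function.update q k t) k =
      binomialLooRegret N q k +
        (((N:ℝ) - k)/N) * (Real.log (1 - q k) - Real.log (1 - t)) := by
  have hN : (0:ℝ) < N := by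
    have : 0 < N := by omega
    exact_mod_cast this
  have hkN : (k:ℝ) < N := by exact_mod_cast hk
  have hc : (0:ℝ) < ((N:ℝ) - k)/N := by
    apply div_pos (by linarith) hN
  have h1t : (0:ℝ) < 1 - t := by linarith
  have h1q : (0:ℝ) < 1 - q k := by linarith
  unfold binomialLooRegret
  have efirst : (if 1 ≤ k then ((k:ℝ)/N) * Real.log (((k:ℝ)/N) / Function.update q k t (k-1)) else 0)
      = (if 1 ≤ k then ((k:ℝ)/N) * Real.log (((k:ℝ)/N) / q (k-1)) else 0) := by
    by_cases h : 1 ≤ k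
    · simp only [if_pos h, Function.update_of_ne (show k - 1 ≠ k by omega)]
    · simp [h]
  rw [efirst, if_pos hk, if_pos hk, Function.update_self,
    Real.log_div hc.ne' h1t.ne', Real.log_div hc.ne' h1q.ne']
  ring

lemma regret_k1_formula (N k : ℕ) (hk : k < N) (q : ℕ → ℝ) (t : ℝ)
    (ht : 0 < t) (hqk : 0 < q k) :
    binomialLooRegret N (Function.update q k t) (k+1) =
      binomialLooRegret N q (k+1) +
        (((k:ℝ)+1)/N) * (Real.log (q k) - Real.log t) := by
  have hN : (0:ℝ) < N := by
    have : 0 < N := by omega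
    exact_mod_cast this
  have ha : (0:ℝ) < ((k:ℝ)+1)/N := by positivity
  have ha' : (((k+1:ℕ):ℝ)/N) = ((k:ℝ)+1)/N := by push_cast; ring
  unfold binomialLooRegret
  have h1 : 1 ≤ k + 1 := by omega
  rw [if_pos h1, if_pos h1]
  rw [show k + 1 - 1 = k from rfl, Function.update_self]
  rw [ha', Real.log_div ha.ne' ht.ne', Real.log_div ha.ne' hqk.ne']
  by_cases h2 : k + 1 < N
  · rw [if_pos h2, if_pos h2, Function.update_of_ne (show (k+1) ≠ k by omega)]
    ring
  · rw [if_neg h2, if_neg h2]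
    ring

lemma perturbA (N k : ℕ) (hk : k < N) (q : ℕ → ℝ)
    (hq : ∀ j < N, q j ∈ Set.Ioo (0:ℝ) 1) (M : ℝ)
    (hA : binomialLooRegret N q (k+1) < M) :
    ∃ q' : ℕ → ℝ, (∀ j < N, q' j ∈ Set.Ioo (0:ℝ) 1) ∧
      binomialLooRegret N q' k < binomialLooRegret N q k ∧
      binomialLooRegret N q' (k+1) < M ∧
      ∀ w, w ≠ k → w ≠ k + 1 → binomialLooRegret N q' w = binomialLooRegret N q w := by
  obtain ⟨hq0, hq1⟩ := hq k hk
  have hN : (0:ℝ) < N := by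
    have : 0 < N := by omega
    exact_mod_cast this
  have hkN : (k:ℝ) < N := by exact_mod_cast hk
  set a : ℝ := ((k:ℝ)+1)/N with hadef
  have ha : 0 < a := by positivity
  set δ := M - binomialLooRegret N q (k+1) with hδdef
  have hδ : 0 < δ := by simp only [hδdef]; linarith
  set t := q k * Real.exp (-(δ/(2*a))) with htdef
  have ht0 : 0 < t := by positivity
  have htq : t < q k := by
    have he : Real.exp (-(δ/(2*a))) < 1 := by
      apply Real.exp_lt_one_iff.mpr
      have : 0 < δ/(2*a) := by positivity
      linarith
    calc t = q k * Real.exp (-(δ/(2*a))) := rfl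
    _ < q k * 1 := by exact mul_lt_mul_of_pos_left he hq0
    _ = q k := by ring
  have ht1 : t < 1 := htq.trans hq1
  refine ⟨Function.update q k t, ?_, ?_, ?_, ?_⟩
  · intro j hj
    rcases eq_or_ne j k with rfl | hne
    · rw [Function.update_self]; exact ⟨ht0, ht1⟩
    · rw [Function.update_of_ne hne]; exact hq j hj
  · rw [regret_k_formula N k hk q t ht1 hq1]
    have hc : (0:ℝ) < ((N:ℝ) - k)/N := div_pos (by linarith) hN
    have hlog : Real.log (1 - q k) - Real.log (1 - t) < 0 := by
      have := Real.log_lt_log (by linarith : (0:ℝ) < 1 - q k) (by linarith : 1 - q k < 1 - t)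
      linarith
    have := mul_neg_of_pos_of_neg hc hlog
    linarith
  · rw [regret_k1_formula N k hk q t ht0 hq0]
    have hlt : Real.log (q k) - Real.log t = δ/(2*a) := by
      rw [htdef, Real.log_mul hq0.ne' (Real.exp_ne_zero _), Real.log_exp]
      ring
    rw [hlt]
    have : a * (δ/(2*a)) = δ/2 := by field_simp
    rw [this]
    simp only [hδdef]
    linarith
  · intro w hw1 hw2
    exact regret_update_ne N k w q t hw2 hw1

lemma perturbB (N k : ℕ) (hk : k < N) (q : ℕ → ℝ)
    (hq : ∀ j < N, q j ∈ Set.Ioo (0:ℝ) 1) (M : ℝ)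
    (hB : binomialLooRegret N q k < M) :
    ∃ q' : ℕ → ℝ, (∀ j < N, q' j ∈ Set.Ioo (0:ℝ) 1) ∧
      binomialLooRegret N q' (k+1) < binomialLooRegret N q (k+1) ∧
      binomialLooRegret N q' k < M ∧
      ∀ w, w ≠ k → w ≠ k + 1 → binomialLooRegret N q' w = binomialLooRegret N q w := by
  obtain ⟨hq0, hq1⟩ := hq k hk
  have hN : (0:ℝ) < N := by
    have : 0 < N := by omega
    exact_mod_cast this
  have hkN : (k:ℝ) < N := by exact_mod_cast hk
  set c : ℝ := ((N:ℝ)-k)/N with hcdef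
  have hc : 0 < c := div_pos (by linarith) hN
  have ha : (0:ℝ) < ((k:ℝ)+1)/N := by positivity
  set δ := M - binomialLooRegret N q k with hδdef
  have hδ : 0 < δ := by simp only [hδdef]; linarith
  set t := 1 - (1 - q k) * Real.exp (-(δ/(2*c))) with htdef
  have hqk1 : (0:ℝ) < 1 - q k := by linarith
  have h1t0 : 0 < (1 - q k) * Real.exp (-(δ/(2*c))) := by positivity
  have he : Real.exp (-(δ/(2*c))) < 1 := by
    apply Real.exp_lt_one_iff.mpr
    have : 0 < δ/(2*c) := by positivity
    linarith
  have htq : q k < t := by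
    have : (1 - q k) * Real.exp (-(δ/(2*c))) < (1 - q k) * 1 :=
      mul_lt_mul_of_pos_left he hqk1
    simp only [htdef]; nlinarith
  have ht1 : t < 1 := by simp only [htdef]; linarith
  have ht0 : 0 < t := hq0.trans htq
  refine ⟨Function.update q k t, ?_, ?_, ?_, ?_⟩
  · intro j hj
    rcases eq_or_ne j k with rfl | hne
    · rw [Function.update_self]; exact ⟨ht0, ht1⟩
    · rw [Function.update_of_ne hne]; exact hq j hj
  · rw [regret_k1_formula N k hk q t ht0 hq0]
    have hlog : Real.log (q k) - Real.log t < 0 := by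
      have := Real.log_lt_log hq0 htq
      linarith
    have := mul_neg_of_pos_of_neg ha hlog
    linarith
  · rw [regret_k_formula N k hk q t ht1 hq1]
    have hlt : Real.log (1 - q k) - Real.log (1 - t) = δ/(2*c) := by
      have h1t : (1:ℝ) - t = (1 - q k) * Real.exp (-(δ/(2*c))) := by
        simp only [htdef]; ring
      rw [h1t, Real.log_mul hqk1.ne' (Real.exp_ne_zero _), Real.log_exp]
      ring
    rw [hlt]
    have : c * (δ/(2*c)) = δ/2 := by field_simp
    rw [this]
    simp only [hδdef]
    linarith
  · intro w hw1 hw2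
    exact regret_update_ne N k w q t hw2 hw1

lemma exists_adj (N : ℕ) (R : ℕ → ℝ) (M : ℝ) (hub : ∀ w ≤ N, R w ≤ M) :
    ∀ d u, u ≤ N → R u = M →
      ((u + d ≤ N ∧ R (u + d) < M) ∨ (d ≤ u ∧ R (u - d) < M)) →
      ∃ k, k + 1 ≤ N ∧ ((R k = M ∧ R (k+1) < M) ∨ (R (k+1) = M ∧ R k < M)) := by
  intro d
  induction d with
  | zero =>
    intro u hu hM h
    rcases h with ⟨_, h⟩ | ⟨_, h⟩
    · simp only [Nat.add_zero] at h; linarith [hM.ge]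
    · simp only [Nat.sub_zero] at h; linarith [hM.ge]
  | succ d ih =>
    intro u hu hM h
    rcases h with ⟨hle, hlt⟩ | ⟨hle, hlt⟩
    · rcases lt_or_eq_of_le (hub (u+1) (by omega)) with h1 | h1
      · exact ⟨u, by omega, Or.inl ⟨hM, h1⟩⟩
      · refine ih (u+1) (by omega) h1 (Or.inl ⟨by omega, ?_⟩)
        have e : u + 1 + d = u + (d + 1) := by omega
        rw [e]; exact hlt
    · rcases lt_or_eq_of_le (hub (u-1) (by omega)) with h1 | h1
      · refine ⟨u - 1, by omega, Or.inr ⟨?_, h1⟩⟩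
        have e : u - 1 + 1 = u := by omega
        rw [e]; exact hM
      · refine ih (u-1) (by omega) h1 (Or.inr ⟨by omega, ?_⟩)
        have e : u - 1 - d = u - (d + 1) := by omega
        rw [e]; exact hlt

noncomputable def Fmax (N : ℕ) (q : ℕ → ℝ) : ℝ :=
  (range (N + 1)).sup' nonempty_range_add_one (binomialLooRegret N q)

lemma le_Fmax (N : ℕ) (q : ℕ → ℝ) {w : ℕ} (hw : w ≤ N) :
    binomialLooRegret N q w ≤ Fmax N q :=
  Finset.le_sup' _ (by simpa [Finset.mem_range] using Nat.lt_succ_of_le hw)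

lemma exists_Fmax_eq (N : ℕ) (q : ℕ → ℝ) :
    ∃ v ≤ N, binomialLooRegret N q v = Fmax N q := by
  obtain ⟨v, hv, h⟩ := Finset.exists_mem_eq_sup' nonempty_range_add_one (binomialLooRegret N q)
  exact ⟨v, by simpa [Finset.mem_range, Nat.lt_succ_iff] using hv, h.symm⟩

lemma main_step (N : ℕ) (hN : 1 ≤ N) :
    ∀ n : ℕ, ∀ q : ℕ → ℝ, (∀ j < N, q j ∈ Set.Ioo (0:ℝ) 1) →
      (∃ w ≤ N, binomialLooRegret N q w < Fmax N q) →
      ((range (N+1)).filter (fun v => binomialLooRegret N q v = Fmax N q)).card ≤ n →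
      ∃ q' : ℕ → ℝ, (∀ j < N, q' j ∈ Set.Ioo (0:ℝ) 1) ∧ Fmax N q' < Fmax N q := by
  intro n
  induction n with
  | zero =>
    intro q hq _ hcard
    obtain ⟨v, hv, hve⟩ := exists_Fmax_eq N q
    exfalso
    have hvmem : v ∈ (range (N+1)).filter (fun v => binomialLooRegret N q v = Fmax N q) := by
      simp [Finset.mem_filter, Finset.mem_range, Nat.lt_succ_iff, hv, hve]
    have := Finset.card_pos.mpr ⟨v, hvmem⟩
    omega
  | succ n ih =>
    intro q hq hex hcard
    obtain ⟨w, hw, hwlt⟩ := hex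
    obtain ⟨u, hu, hue⟩ := exists_Fmax_eq N q
    set M := Fmax N q with hMdef
    have hub : ∀ x ≤ N, binomialLooRegret N q x ≤ M := fun x hx => le_Fmax N q hx
    have hadj : ∃ k, k + 1 ≤ N ∧
        ((binomialLooRegret N q k = M ∧ binomialLooRegret N q (k+1) < M) ∨
         (binomialLooRegret N q (k+1) = M ∧ binomialLooRegret N q k < M)) := by
      rcases le_total u w with h | h
      · refine exists_adj N _ M hub (w - u) u hu hue (Or.inl ⟨by omega, ?_⟩)
        have e : u + (w - u) = w := by omega
        rw [e]; exact hwlt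
      · refine exists_adj N _ M hub (u - w) u hu hue (Or.inr ⟨by omega, ?_⟩)
        have e : u - (u - w) = w := by omega
        rw [e]; exact hwlt
    obtain ⟨k, hkN, hcase⟩ := hadj
    have hk : k < N := by omega
    -- unified treatment
    obtain ⟨q', hq', hdrop, hnbr, heq, kdrop, hkdropN, hkdropmax, hkdropor⟩ :
        ∃ q' : ℕ → ℝ, (∀ j < N, q' j ∈ Set.Ioo (0:ℝ) 1) ∧
          binomialLooRegret N q' k < M ∧ binomialLooRegret N q' (k+1) < M ∧
          (∀ x, x ≠ k → x ≠ k + 1 → binomialLooRegret N q' x = binomialLooRegret N q x) ∧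
          ∃ kd, kd ≤ N ∧ binomialLooRegret N q kd = M ∧ (kd = k ∨ kd = k + 1) := by
      rcases hcase with ⟨hkM, hk1lt⟩ | ⟨hk1M, hklt⟩
      · obtain ⟨q', a1, a2, a3, a4⟩ := perturbA N k hk q hq M hk1lt
        exact ⟨q', a1, by rw [hkM] at a2; exact a2, a3, a4, k, by omega, hkM, Or.inl rfl⟩
      · obtain ⟨q', a1, a2, a3, a4⟩ := perturbB N k hk q hq M hklt
        exact ⟨q', a1, a3, by rw [hk1M] at a2; exact a2, a4, k+1, hkN, hk1M, Or.inr rfl⟩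
    have hub' : ∀ x ≤ N, binomialLooRegret N q' x ≤ M := by
      intro x hx
      rcases eq_or_ne x k with rfl | h1
      · exact hdrop.le
      rcases eq_or_ne x (k+1) with rfl | h2
      · exact hnbr.le
      · rw [heq x h1 h2]; exact hub x hx
    have hFle : Fmax N q' ≤ M := by
      apply Finset.sup'_le
      intro x hx
      exact hub' x (by simpa [Finset.mem_range, Nat.lt_succ_iff] using hx)
    rcases lt_or_eq_of_le hFle with hlt' | heq'
    · exact ⟨q', hq', hlt'⟩
    · -- Fmax q' = M : maximizer set shrinks
      obtain ⟨q'', hq'', hlt''⟩ := ih q' hq'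
        ⟨k, by omega, by rw [heq']; exact hdrop⟩
        (by
          have hsub : (range (N+1)).filter (fun v => binomialLooRegret N q' v = Fmax N q') ⊆
              ((range (N+1)).filter (fun v => binomialLooRegret N q v = M)).erase kdrop := by
            intro x hx
            simp only [Finset.mem_filter, Finset.mem_range] at hx
            obtain ⟨hxr, hxe⟩ := hx
            rw [heq'] at hxe
            have h1 : x ≠ k := by rintro rfl; linarith
            have h2 : x ≠ k + 1 := by rintro rfl; linarith
            have h3 : x ≠ kdrop := by rcases hkdropor with rfl | rfl <;> assumption
            rw [heq x h1 h2] at hxe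
            exact Finset.mem_erase.mpr ⟨h3, Finset.mem_filter.mpr ⟨Finset.mem_range.mpr hxr, hxe⟩⟩
          have hkmem : kdrop ∈ (range (N+1)).filter (fun v => binomialLooRegret N q v = M) := by
            simp only [Finset.mem_filter, Finset.mem_range, Nat.lt_succ_iff]
            exact ⟨hkdropN, hkdropmax⟩
          have h1 := Finset.card_le_card hsub
          have h2 := Finset.card_erase_of_mem hkmem
          omega)
      exact ⟨q'', hq'', by rw [← heq']; exact hlt''⟩


/-- Equalizer property in the binomial case: if a probability assignment
`q : {0,…,N-1} → (0,1)` does not attain the same regret for every `v ∈ {0,…,N}`, then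
there is an assignment `q'` with strictly smaller maximal regret; hence any minimax
optimal assignment is an equalizer. -/
theorem binomial_equalizer (N : ℕ) (hN : 1 ≤ N) (q : ℕ → ℝ)
    (hq : ∀ k < N, q k ∈ Set.Ioo (0 : ℝ) 1)
    (hne : ¬ ∀ v ≤ N, ∀ v' ≤ N,
      binomialLooRegret N q v = binomialLooRegret N q v') :
    ∃ q' : ℕ → ℝ, (∀ k < N, q' k ∈ Set.Ioo (0 : ℝ) 1) ∧
      (range (N + 1)).sup' nonempty_range_add_one (binomialLooRegret N q') <
      (range (N + 1)).sup' nonempty_range_add_one (binomialLooRegret N q) := by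
  push_neg at hne
  obtain ⟨v, hv, v', hv', hvv'⟩ := hne
  have hex : ∃ w ≤ N, binomialLooRegret N q w < Fmax N q := by
    have h1 := le_Fmax N q hv
    have h2 := le_Fmax N q hv'
    rcases lt_or_eq_of_le h1 with h | h
    · exact ⟨v, hv, h⟩
    · rcases lt_or_eq_of_le h2 with h' | h'
      · exact ⟨v', hv', h'⟩
      · exact absurd (h.trans h'.symm) hvv'
  obtain ⟨q', hq', hlt⟩ := main_step N hN
    ((range (N+1)).filter (fun v => binomialLooRegret N q v = Fmax N q)).card
    q hq hex le_rfl
  exact ⟨q', hq', hlt⟩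
end
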